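/- arXiv:1509.04500 — 9 statements merged into one kernel-verified Lean document; each statement's English description precedes it below -/
import Mathlib

section
/- Let z be a nonzero complex number, (z_n)_{n≥0} an iteration sequence for z, (a_n)_{n≥0} the associated partial quotients, and (p_n), (q_n) the Q-pair associated to (a_n). Then for every n ≥ 0, q_n·z − p_n = (−1)^n · (z_1·z_2⋯z_{n+1})^{−1}. -/
/-!
The error `eₙ = qₙ z − pₙ` obeys the same three-term recurrence as `pₙ` and `qₙ`. Since
`aₙ₊₁ = zₙ₊₁ − zₙ₊₂⁻¹`, this recurrence propagates the first-order relation
`eₙ₊₁ zₙ₊₁ = −eₙ`, which holds initially because `e₋₁ = −1` and `e₀ = z − a₀ = z₁⁻¹`.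
Iterating it gives the product formula.
-/

section ErrorRecurrence

variable {K : Type*} [Field K] {x e : ℕ → K}

theorem mul_succ_eq_neg_of_recurrence (hx : ∀ n, x n ≠ 0)
    (he : ∀ n, e (n + 2) = (x (n + 1) - (x (n + 2))⁻¹) * e (n + 1) + e n)
    (h0 : e 1 * x 1 = -e 0) : ∀ n, e (n + 1) * x (n + 1) = -e n := by
  intro n
  induction n with
  | zero => exact h0
  | succ n ih =>
    have hx2 := hx (n + 2)
    calc e (n + 2) * x (n + 2)
        = x (n + 2) * (e (n + 1) * x (n + 1) + e n) - e (n + 1) := by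
          rw [he]; field_simp; ring
      _ = -e (n + 1) := by rw [ih]; ring

theorem eq_neg_one_pow_mul_prod_inv (hx : ∀ n, x n ≠ 0)
    (h : ∀ n, e (n + 1) * x (n + 1) = -e n) :
    ∀ n, e n = (-1) ^ n * e 0 * (∏ k ∈ Finset.range n, x (k + 1))⁻¹ := by
  intro n
  induction n with
  | zero => simp
  | succ n ih =>
    have hxn := hx (n + 1)
    calc e (n + 1) = -e n * (x (n + 1))⁻¹ := by rw [← h n]; field_simp
      _ = _ := by rw [ih, Finset.prod_range_succ, mul_inv]; ring

end ErrorRecurrence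

/-- `p`, `q` are indexed with an offset of one: `p (n+1) = pₙ`, `q (n+1) = qₙ`. -/
theorem qpair_error_formula_general (z : ℂ) (zs : ℕ → ℂ)
    (hzs0 : zs 0 = z) (hzsne : ∀ n, zs n ≠ 0)
    (a : ℕ → ℂ) (haz : ∀ n, a n = zs n - (zs (n + 1))⁻¹)
    (p q : ℕ → ℂ)
    (hp0 : p 0 = 1) (hp1 : p 1 = a 0)
    (hp : ∀ n, p (n + 2) = a (n + 1) * p (n + 1) + p n)
    (hq0 : q 0 = 0) (hq1 : q 1 = 1)
    (hq : ∀ n, q (n + 2) = a (n + 1) * q (n + 1) + q n) :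
    ∀ n : ℕ, q (n + 1) * z - p (n + 1) =
      (-1 : ℂ) ^ n * (∏ k ∈ Finset.range (n + 1), zs (k + 1))⁻¹ := by
  set e : ℕ → ℂ := fun n => q n * z - p n with he
  have hrec : ∀ n, e (n + 2) = (zs (n + 1) - (zs (n + 2))⁻¹) * e (n + 1) + e n := by
    intro n; simp only [he, hp, hq, ← haz]; ring
  have hinit : e 1 * zs 1 = -e 0 := by
    simp only [he, hp0, hp1, hq0, hq1, haz, hzs0]
    field_simp [hzsne 1]
    ring
  intro n
  change e (n + 1) = _
  rw [eq_neg_one_pow_mul_prod_inv hzsne (mul_succ_eq_neg_of_recurrence hzsne hrec hinit)]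
  simp only [he, hp0, hq0]
  ring

/-- For an iteration sequence `zs` for `z` with partial quotients `a` and
Q-pair `p`, `q` (indexed with an offset of one, so `p (n+1) = pₙ`),
one has `qₙ z − pₙ = (−1)ⁿ (z₁⋯z₍ₙ₊₁₎)⁻¹` for all `n ≥ 0`. -/
theorem qpair_error_formula (z : ℂ) (hz : z ≠ 0) (zs : ℕ → ℂ)
    (hzs0 : zs 0 = z) (hzsne : ∀ n, zs n ≠ 0)
    (hzsabs : ∀ n, 1 ≤ n → 1 ≤ ‖zs n‖)
    (hzsinv : ∀ n, 1 ≤ n → zs (n + 1) ≠ (zs n)⁻¹)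
    (a : ℕ → ℂ) (haz : ∀ n, a n = zs n - (zs (n + 1))⁻¹)
    (p q : ℕ → ℂ)
    (hp0 : p 0 = 1) (hp1 : p 1 = a 0)
    (hp : ∀ n, p (n + 2) = a (n + 1) * p (n + 1) + p n)
    (hq0 : q 0 = 0) (hq1 : q 1 = 1)
    (hq : ∀ n, q (n + 2) = a (n + 1) * q (n + 1) + q n) :
    ∀ n : ℕ, q (n + 1) * z - p (n + 1) =
      (-1 : ℂ) ^ n * (∏ k ∈ Finset.range (n + 1), zs (k + 1))⁻¹ :=
  qpair_error_formula_general z zs hzs0 hzsne a haz p q hp0 hp1 hp hq0 hq1 hq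
end

section
/- Let z be a nonzero complex number, (z_n)_{n≥0} an iteration sequence for z, (a_n)_{n≥0} the associated partial quotients, and (p_n), (q_n) the Q-pair associated to (a_n). Then for every n ≥ 0, if |p_n| > |z_1|^{−1}, then q_n ≠ 0. -/
/-!
Put `rₙ = qₙ z₀ - pₙ`. It satisfies the recurrence of the Q-pair, and since
`aₙ = zₙ - z₍ₙ₊₁₎⁻¹` this collapses to the first-order relation `rₙ zₙ₊₁ = -rₙ₋₁`
(with `r₋₁ = -1`). As `|zₙ| ≥ 1` for `n ≥ 1`, the `|rₙ|` decrease from `|r₀| = |z₁|⁻¹`;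
so `qₙ = 0` would force `|pₙ| = |rₙ| ≤ |z₁|⁻¹`. (Indices as in the paper; in the code
`r (n + 1)` is `rₙ`.)
-/

theorem mul_succ_eq_neg_of_recurrence_s2 {K : Type*} [Field K] {x r : ℕ → K}
    (hx : ∀ n, x (n + 1) ≠ 0)
    (hr : ∀ n, r (n + 2) = (x (n + 1) - (x (n + 2))⁻¹) * r (n + 1) + r n)
    (hr1 : r 1 * x 1 = -r 0) (n : ℕ) : r (n + 1) * x (n + 1) = -r n := by
  induction n with
  | zero => exact hr1
  | succ n ih =>
    have hinv : x (n + 2) * (x (n + 2))⁻¹ = 1 := mul_inv_cancel₀ (hx (n + 1))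
    rw [hr n]
    linear_combination x (n + 2) * ih - r (n + 1) * hinv

theorem antitone_norm_of_mul_succ_eq_neg {K : Type*} [NormedField K] {x r : ℕ → K}
    (hx : ∀ n, 1 ≤ ‖x (n + 2)‖) (hr : ∀ n, r (n + 2) * x (n + 2) = -r (n + 1)) :
    Antitone fun n => ‖r (n + 1)‖ := by
  refine antitone_nat_of_succ_le fun n => ?_
  calc ‖r (n + 2)‖ ≤ ‖r (n + 2)‖ * ‖x (n + 2)‖ := le_mul_of_one_le_right (norm_nonneg _) (hx n)
    _ = ‖r (n + 1)‖ := by rw [← norm_mul, hr n, norm_neg]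

theorem qpair_q_ne_zero_general (zs : ℕ → ℂ)
    (hzsne : ∀ n, zs n ≠ 0)
    (hzsabs : ∀ n, 1 ≤ n → 1 ≤ ‖zs n‖)
    (a : ℕ → ℂ) (haz : ∀ n, a n = zs n - (zs (n + 1))⁻¹)
    (p q : ℕ → ℂ)
    (hp0 : p 0 = 1) (hp1 : p 1 = a 0)
    (hp : ∀ n, p (n + 2) = a (n + 1) * p (n + 1) + p n)
    (hq0 : q 0 = 0) (hq1 : q 1 = 1)
    (hq : ∀ n, q (n + 2) = a (n + 1) * q (n + 1) + q n) :
    ∀ n : ℕ, (‖zs 1‖)⁻¹ < ‖p (n + 1)‖ → q (n + 1) ≠ 0 := by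
  intro n hlt hqz
  set r : ℕ → ℂ := fun n => q n * zs 0 - p n with hr
  have hrec : ∀ n, r (n + 2) = (zs (n + 1) - (zs (n + 2))⁻¹) * r (n + 1) + r n := by
    intro n
    simp only [hr, hp, hq, haz]
    ring
  have hr1 : r 1 * zs 1 = -r 0 := by
    simp only [hr, hp0, hp1, hq0, hq1, haz]
    field_simp [hzsne 1]
    ring
  have hmul := mul_succ_eq_neg_of_recurrence_s2 (fun n => hzsne (n + 1)) hrec hr1
  have hanti := antitone_norm_of_mul_succ_eq_neg (fun n => hzsabs (n + 2) (by omega))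
    (fun n => hmul (n + 1))
  have hr1_norm : ‖r 1‖ = ‖zs 1‖⁻¹ := by
    refine eq_inv_of_mul_eq_one_left ?_
    rw [← norm_mul, hr1]
    simp [hr, hp0, hq0]
  have hp_le : ‖p (n + 1)‖ ≤ ‖zs 1‖⁻¹ := by
    have h : ‖r (n + 1)‖ ≤ ‖r 1‖ := hanti (Nat.zero_le n)
    have hrn : r (n + 1) = -p (n + 1) := by simp [hr, hqz]
    rwa [hr1_norm, hrn, norm_neg] at h
  exact hp_le.not_gt hlt

/-- For an iteration sequence `zs` for `z` with partial quotients `a` and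
Q-pair `p`, `q` (indexed with an offset of one, so `p (n+1) = pₙ`),
for every `n ≥ 0`: if `|pₙ| > |z₁|⁻¹` then `qₙ ≠ 0`. -/
theorem qpair_q_ne_zero (z : ℂ) (hz : z ≠ 0) (zs : ℕ → ℂ)
    (hzs0 : zs 0 = z) (hzsne : ∀ n, zs n ≠ 0)
    (hzsabs : ∀ n, 1 ≤ n → 1 ≤ ‖zs n‖)
    (hzsinv : ∀ n, 1 ≤ n → zs (n + 1) ≠ (zs n)⁻¹)
    (a : ℕ → ℂ) (haz : ∀ n, a n = zs n - (zs (n + 1))⁻¹)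
    (p q : ℕ → ℂ)
    (hp0 : p 0 = 1) (hp1 : p 1 = a 0)
    (hp : ∀ n, p (n + 2) = a (n + 1) * p (n + 1) + p n)
    (hq0 : q 0 = 0) (hq1 : q 1 = 1)
    (hq : ∀ n, q (n + 2) = a (n + 1) * q (n + 1) + q n) :
    ∀ n : ℕ, (‖zs 1‖)⁻¹ < ‖p (n + 1)‖ → q (n + 1) ≠ 0 :=
  qpair_q_ne_zero_general zs hzsne hzsabs a haz p q hp0 hp1 hp hq0 hq1 hq
end

section
/- Let z be a nonzero complex number, (z_n)_{n≥0} an iteration sequence for z, (a_n)_{n≥0} the associated partial quotients, and (p_n), (q_n) the Q-pair associated to (a_n). Then for every n ≥ 0 such that |q_{n−1}| < |q_n|, one has |z − p_n/q_n| ≤ |q_n|^{−2} · (|z_{n+1}| − |q_{n−1}/q_n|)^{−1}. -/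
/-!
The complete quotients give `z = (z₍ₙ₊₁₎ pₙ + pₙ₋₁) / (z₍ₙ₊₁₎ qₙ + qₙ₋₁)`, and together with the
determinant identity `pₙ₋₁ qₙ − pₙ qₙ₋₁ = ±1` this yields
`|z − pₙ/qₙ| = |qₙ|⁻² |z₍ₙ₊₁₎ + qₙ₋₁/qₙ|⁻¹`; the reverse triangle inequality finishes.
-/

theorem qpair_det {R : Type*} [CommRing R] (a p q : ℕ → R)
    (hp0 : p 0 = 1) (hp : ∀ n, p (n + 2) = a (n + 1) * p (n + 1) + p n)
    (hq0 : q 0 = 0) (hq1 : q 1 = 1) (hq : ∀ n, q (n + 2) = a (n + 1) * q (n + 1) + q n) (n : ℕ) :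
    p n * q (n + 1) - p (n + 1) * q n = (-1) ^ n := by
  induction n with
  | zero => simp [hp0, hq0, hq1]
  | succ k ih =>
    rw [hq k, hp k, pow_succ]
    linear_combination -ih

theorem qpair_complete_quotient {K : Type*} [Field K] (x a p q : ℕ → K)
    (hx : ∀ n, x (n + 1) ≠ 0) (ha : ∀ n, a n = x n - (x (n + 1))⁻¹)
    (hp0 : p 0 = 1) (hp1 : p 1 = a 0) (hp : ∀ n, p (n + 2) = a (n + 1) * p (n + 1) + p n)
    (hq0 : q 0 = 0) (hq1 : q 1 = 1) (hq : ∀ n, q (n + 2) = a (n + 1) * q (n + 1) + q n) (n : ℕ) :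
    x 0 * (x (n + 1) * q (n + 1) + q n) = x (n + 1) * p (n + 1) + p n := by
  induction n with
  | zero =>
    have := hx 0
    rw [hq0, hq1, hp0, hp1, ha 0]
    field_simp
    ring
  | succ k ih =>
    have hx' := hx (k + 1)
    have step : ∀ r : ℕ → K, (∀ n, r (n + 2) = a (n + 1) * r (n + 1) + r n) →
        x (k + 2) * r (k + 2) + r (k + 1) = x (k + 2) * (x (k + 1) * r (k + 1) + r k) := by
      intro r hr
      rw [hr k, ha (k + 1)]
      field_simp
      ring
    rw [step q hq, step p hp, ← ih]
    ring

theorem sub_div_mul_eq_of_mul_add_eq {K : Type*} [Field K] {x w P P' Q Q' : K}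
    (h : x * (w * Q + Q') = w * P + P') (hQ : Q ≠ 0) :
    (x - P / Q) * ((w * Q + Q') * Q) = P' * Q - P * Q' := by
  field_simp
  linear_combination Q * h

theorem inv_norm_mul_add_mul_le {K : Type*} [NormedField K] {w Q Q' : K}
    (hw : 1 ≤ ‖w‖) (hQ : ‖Q'‖ < ‖Q‖) :
    ‖(w * Q + Q') * Q‖⁻¹ ≤ (‖Q‖ ^ 2)⁻¹ * (‖w‖ - ‖Q' / Q‖)⁻¹ := by
  have hQpos : 0 < ‖Q‖ := (norm_nonneg _).trans_lt hQ
  have hQ0 : Q ≠ 0 := norm_pos_iff.mp hQpos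
  have hratio : ‖Q' / Q‖ < 1 := by
    rw [norm_div, div_lt_one hQpos]
    exact hQ
  have hpos : 0 < ‖w‖ - ‖Q' / Q‖ := by linarith
  have hfactor : (w * Q + Q') * Q = Q ^ 2 * (w + Q' / Q) := by
    field_simp
  rw [hfactor, norm_mul, norm_pow, mul_inv]
  gcongr
  simpa using norm_sub_norm_le w (-(Q' / Q))

theorem qpair_approx_bound_general (z : ℂ) (zs : ℕ → ℂ)
    (hzs0 : zs 0 = z) (hzsne : ∀ n, zs n ≠ 0)
    (hzsabs : ∀ n, 1 ≤ n → 1 ≤ ‖zs n‖)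
    (a : ℕ → ℂ) (haz : ∀ n, a n = zs n - (zs (n + 1))⁻¹)
    (p q : ℕ → ℂ)
    (hp0 : p 0 = 1) (hp1 : p 1 = a 0)
    (hp : ∀ n, p (n + 2) = a (n + 1) * p (n + 1) + p n)
    (hq0 : q 0 = 0) (hq1 : q 1 = 1)
    (hq : ∀ n, q (n + 2) = a (n + 1) * q (n + 1) + q n) :
    ∀ n : ℕ, ‖q n‖ < ‖q (n + 1)‖ →
      ‖z - p (n + 1) / q (n + 1)‖ ≤
        (‖q (n + 1)‖ ^ 2)⁻¹ *
          (‖zs (n + 1)‖ - ‖q n / q (n + 1)‖)⁻¹ := by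
  intro n hn
  have hQ : q (n + 1) ≠ 0 := norm_pos_iff.mp ((norm_nonneg _).trans_lt hn)
  have hquot := qpair_complete_quotient zs a p q (fun n => hzsne (n + 1)) haz
    hp0 hp1 hp hq0 hq1 hq n
  have herr := sub_div_mul_eq_of_mul_add_eq hquot hQ
  rw [qpair_det a p q hp0 hp hq0 hq1 hq, hzs0] at herr
  have hnorm : ‖z - p (n + 1) / q (n + 1)‖ = ‖(zs (n + 1) * q (n + 1) + q n) * q (n + 1)‖⁻¹ :=
    eq_inv_of_mul_eq_one_left (by simpa using congrArg norm herr)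
  rw [hnorm]
  exact inv_norm_mul_add_mul_le (hzsabs (n + 1) n.succ_pos) hn

/-- For an iteration sequence `zs` for `z` with partial quotients `a` and
Q-pair `p`, `q` (indexed with an offset of one, so `p (n+1) = pₙ`),
for every `n ≥ 0` with `|q₍ₙ₋₁₎| < |qₙ|`:
`|z − pₙ/qₙ| ≤ |qₙ|⁻² (|z₍ₙ₊₁₎| − |q₍ₙ₋₁₎/qₙ|)⁻¹`. -/
theorem qpair_approx_bound (z : ℂ) (hz : z ≠ 0) (zs : ℕ → ℂ)
    (hzs0 : zs 0 = z) (hzsne : ∀ n, zs n ≠ 0)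
    (hzsabs : ∀ n, 1 ≤ n → 1 ≤ ‖zs n‖)
    (hzsinv : ∀ n, 1 ≤ n → zs (n + 1) ≠ (zs n)⁻¹)
    (a : ℕ → ℂ) (haz : ∀ n, a n = zs n - (zs (n + 1))⁻¹)
    (p q : ℕ → ℂ)
    (hp0 : p 0 = 1) (hp1 : p 1 = a 0)
    (hp : ∀ n, p (n + 2) = a (n + 1) * p (n + 1) + p n)
    (hq0 : q 0 = 0) (hq1 : q 1 = 1)
    (hq : ∀ n, q (n + 2) = a (n + 1) * q (n + 1) + q n) :
    ∀ n : ℕ, ‖q n‖ < ‖q (n + 1)‖ →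
      ‖z - p (n + 1) / q (n + 1)‖ ≤
        (‖q (n + 1)‖ ^ 2)⁻¹ *
          (‖zs (n + 1)‖ - ‖q n / q (n + 1)‖)⁻¹ :=
  qpair_approx_bound_general z zs hzs0 hzsne hzsabs a haz p q hp0 hp1 hp hq0 hq1 hq
end

section
/- Let z be a nonzero complex number, (z_n)_{n≥0} an iteration sequence for z, (a_n)_{n≥0} the associated partial quotients, and (p_n), (q_n) the Q-pair associated to (a_n). If q_n ≠ 0 for all n ≥ 0 and |q_n| → ∞ as n → ∞, then p_n/q_n converges to z as n → ∞. -/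
/-!
The errors `xₙ = pₙ - z qₙ` satisfy the same three-term recurrence as `pₙ` and `qₙ`, and
`aₙ = zₙ - zₙ₊₁⁻¹` turns it into the two-term relation `xₙ zₙ₊₁ = -xₙ₋₁`, which holds at the start
because `z₀ = z`. Since `|zₙ₊₁| ≥ 1`, the `|xₙ|` decrease from `|x₋₁| = 1`, so
`|pₙ/qₙ - z| ≤ 1/|qₙ| → 0`.
-/

open Filter Topology

section Recurrence

variable {K : Type*} [Field K] {zs a x : ℕ → K}

theorem succ_mul_add_eq_mul_of_recurrence (ha : ∀ n, a n = zs n - (zs (n + 1))⁻¹)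
    (hzs : ∀ n, zs (n + 1) ≠ 0) (hx : ∀ n, x (n + 2) = a (n + 1) * x (n + 1) + x n) (n : ℕ) :
    x (n + 2) * zs (n + 2) + x (n + 1) = zs (n + 2) * (x (n + 1) * zs (n + 1) + x n) := by
  have hz : zs (n + 2) ≠ 0 := hzs (n + 1)
  rw [hx, ha]
  field_simp
  ring

theorem mul_add_eq_zero_of_recurrence (ha : ∀ n, a n = zs n - (zs (n + 1))⁻¹)
    (hzs : ∀ n, zs (n + 1) ≠ 0) (hx : ∀ n, x (n + 2) = a (n + 1) * x (n + 1) + x n)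
    (h0 : x 1 * zs 1 + x 0 = 0) (n : ℕ) : x (n + 1) * zs (n + 1) + x n = 0 := by
  induction n with
  | zero => exact h0
  | succ n ih => rw [succ_mul_add_eq_mul_of_recurrence ha hzs hx, ih, mul_zero]

end Recurrence

section Norms

variable {K : Type*} [NormedField K]

theorem antitone_norm_of_mul_add_eq_zero {zs x : ℕ → K} (hzs : ∀ n, 1 ≤ ‖zs (n + 1)‖)
    (hx : ∀ n, x (n + 1) * zs (n + 1) + x n = 0) : Antitone fun n => ‖x n‖ := by
  refine antitone_nat_of_succ_le fun n => ?_
  have hxn : ‖x (n + 1)‖ * ‖zs (n + 1)‖ = ‖x n‖ := by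
    rw [← norm_mul, eq_neg_of_add_eq_zero_left (hx n), norm_neg]
  calc ‖x (n + 1)‖ = ‖x (n + 1)‖ * 1 := (mul_one _).symm
    _ ≤ ‖x (n + 1)‖ * ‖zs (n + 1)‖ := by gcongr; exact hzs n
    _ = ‖x n‖ := hxn

theorem tendsto_div_of_norm_sub_mul_le {ι : Type*} {l : Filter ι} {p q : ι → K} {z : K} {C : ℝ}
    (hq : Tendsto (fun i => ‖q i‖) l atTop) (hpq : ∀ i, ‖p i - z * q i‖ ≤ C) :
    Tendsto (fun i => p i / q i) l (𝓝 z) := by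
  have hq_ne : ∀ᶠ i in l, q i ≠ 0 :=
    (hq.eventually_gt_atTop 0).mono fun i hi => norm_pos_iff.mp hi
  have hdist : ∀ᶠ i in l, dist (p i / q i) z ≤ C * ‖q i‖⁻¹ := by
    filter_upwards [hq_ne] with i hi
    rw [dist_eq_norm, div_sub' hi, norm_div, div_eq_mul_inv]
    gcongr
    rw [mul_comm]
    exact hpq i
  have hbound : Tendsto (fun i => C * ‖q i‖⁻¹) l (𝓝 0) := by
    simpa using hq.inv_tendsto_atTop.const_mul C
  exact tendsto_iff_dist_tendsto_zero.mpr
    (squeeze_zero' (Eventually.of_forall fun _ => dist_nonneg) hdist hbound)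

end Norms

theorem qpair_convergents_tendsto_general (z : ℂ) (zs : ℕ → ℂ)
    (hzs0 : zs 0 = z)
    (hzsabs : ∀ n, 1 ≤ n → 1 ≤ ‖zs n‖)
    (a : ℕ → ℂ) (haz : ∀ n, a n = zs n - (zs (n + 1))⁻¹)
    (p q : ℕ → ℂ)
    (hp0 : p 0 = 1) (hp1 : p 1 = a 0)
    (hp : ∀ n, p (n + 2) = a (n + 1) * p (n + 1) + p n)
    (hq0 : q 0 = 0) (hq1 : q 1 = 1)
    (hq : ∀ n, q (n + 2) = a (n + 1) * q (n + 1) + q n)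
    (hqinf : Filter.Tendsto (fun n => ‖q (n + 1)‖) Filter.atTop Filter.atTop) :
    Filter.Tendsto (fun n => p (n + 1) / q (n + 1)) Filter.atTop (nhds z) := by
  have hzs_norm : ∀ n, 1 ≤ ‖zs (n + 1)‖ := fun n => hzsabs (n + 1) n.succ_pos
  have hzs : ∀ n, zs (n + 1) ≠ 0 := fun n => norm_pos_iff.mp (one_pos.trans_le (hzs_norm n))
  set x : ℕ → ℂ := fun n => p n - z * q n with hx
  have hrec : ∀ n, x (n + 2) = a (n + 1) * x (n + 1) + x n := by
    intro n
    simp only [hx, hp, hq]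
    ring
  have hstart : x 1 * zs 1 + x 0 = 0 := by
    have hz1 : zs 1 ≠ 0 := hzs 0
    simp only [hx, hp0, hp1, hq0, hq1, haz 0, hzs0]
    field_simp
    ring
  have hanti := antitone_norm_of_mul_add_eq_zero hzs_norm
    (mul_add_eq_zero_of_recurrence haz hzs hrec hstart)
  have hx0 : ‖x 0‖ = 1 := by simp [hx, hp0, hq0]
  exact tendsto_div_of_norm_sub_mul_le hqinf fun n => (hanti (Nat.zero_le (n + 1))).trans hx0.le

/-- For an iteration sequence `zs` for `z` with partial quotients `a` and
Q-pair `p`, `q` (indexed with an offset of one, so `p (n+1) = pₙ`):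
if `qₙ ≠ 0` for all `n ≥ 0` and `|qₙ| → ∞`, then `pₙ/qₙ → z`. -/
theorem qpair_convergents_tendsto (z : ℂ) (hz : z ≠ 0) (zs : ℕ → ℂ)
    (hzs0 : zs 0 = z) (hzsne : ∀ n, zs n ≠ 0)
    (hzsabs : ∀ n, 1 ≤ n → 1 ≤ ‖zs n‖)
    (hzsinv : ∀ n, 1 ≤ n → zs (n + 1) ≠ (zs n)⁻¹)
    (a : ℕ → ℂ) (haz : ∀ n, a n = zs n - (zs (n + 1))⁻¹)
    (p q : ℕ → ℂ)
    (hp0 : p 0 = 1) (hp1 : p 1 = a 0)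
    (hp : ∀ n, p (n + 2) = a (n + 1) * p (n + 1) + p n)
    (hq0 : q 0 = 0) (hq1 : q 1 = 1)
    (hq : ∀ n, q (n + 2) = a (n + 1) * q (n + 1) + q n)
    (hqne : ∀ n : ℕ, q (n + 1) ≠ 0)
    (hqinf : Filter.Tendsto (fun n => ‖q (n + 1)‖) Filter.atTop Filter.atTop) :
    Filter.Tendsto (fun n => p (n + 1) / q (n + 1)) Filter.atTop (nhds z) :=
  qpair_convergents_tendsto_general z zs hzs0 hzsabs a haz p q hp0 hp1 hp hq0 hq1 hq hqinf
end

section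
/- Let z be a nonzero complex number, (z_n)_{n≥0} an iteration sequence for z, (a_n)_{n≥0} the associated partial quotients, and (p_n), (q_n) the Q-pair associated to (a_n). Suppose that (a_n)_{n≥0} is contained in a discrete subring Γ of ℂ and that there exists α > 0 such that |z_n| ≥ 1 + α for all n ≥ 1. Then q_n ≠ 0 for all n ≥ 0, p_n/q_n → z as n → ∞, and for every n such that |q_{n−1}| < |q_n| one has |z − p_n/q_n| ≤ α^{−1}·|q_n|^{−2}. -/
/-!
With `Wₙ = zₙ₊₁ qₙ + qₙ₋₁`, the recurrences give `Wₙ = z₁ ⋯ zₙ₊₁` and `(qₙ z - pₙ) Wₙ = (-1)ⁿ`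
(the latter from `pₙ qₙ₋₁ - pₙ₋₁ qₙ = (-1)ⁿ⁺¹`), so `|z - pₙ/qₙ| = (|qₙ| |Wₙ|)⁻¹` with
`|Wₙ| ≥ (1 + α)ⁿ⁺¹ > 1`. In a discrete subring every nonzero element has norm `≥ 1`; since
`pₙ, qₙ ∈ Γ`, `qₙ = 0` would give `0 < |pₙ| < 1`, and `|qₙ| ≥ 1` yields the convergence.
Finally `|Wₙ| ≥ |zₙ₊₁| |qₙ| - |qₙ₋₁| ≥ α |qₙ|` when `|qₙ₋₁| < |qₙ|`.
-/

open Filter Topology Finset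

theorem Subring.one_le_norm_of_mem {R : Type*} [NormedRing R] [NoZeroDivisors R]
    (Γ : Subring R) [DiscreteTopology Γ] {x : R} (hx : x ∈ Γ) (hx0 : x ≠ 0) : 1 ≤ ‖x‖ := by
  by_contra! h
  have hpow : Tendsto (fun n => (⟨x ^ n, pow_mem hx n⟩ : Γ)) atTop (𝓝 0) := by
    rw [Topology.IsInducing.subtypeVal.tendsto_nhds_iff]
    exact tendsto_pow_atTop_nhds_zero_of_norm_lt_one h
  rw [nhds_discrete, tendsto_pure] at hpow
  obtain ⟨n, hn⟩ := hpow.exists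
  exact pow_ne_zero n hx0 (congrArg Subtype.val hn)

theorem Subring.mem_of_recurrence {R : Type*} [Ring R] {S : Subring R} {a u : ℕ → R}
    (ha : ∀ n, a n ∈ S) (hu : ∀ n, u (n + 2) = a (n + 1) * u (n + 1) + u n)
    (h0 : u 0 ∈ S) (h1 : u 1 ∈ S) (n : ℕ) : u n ∈ S := by
  induction n using Nat.twoStepInduction with
  | zero => exact h0
  | one => exact h1
  | more n ihn ihn1 => rw [hu]; exact add_mem (mul_mem (ha _) ihn1) ihn

/-- The paper's `p_n, q_n` are `p (n + 1), q (n + 1)` here. -/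
structure IsQPair {R : Type*} [Semiring R] (a p q : ℕ → R) : Prop where
  p_zero : p 0 = 1
  p_one : p 1 = a 0
  p_succ_succ : ∀ n, p (n + 2) = a (n + 1) * p (n + 1) + p n
  q_zero : q 0 = 0
  q_one : q 1 = 1
  q_succ_succ : ∀ n, q (n + 2) = a (n + 1) * q (n + 1) + q n

theorem mul_sub_mul_of_recurrence {R : Type*} [CommRing R] {a u v : ℕ → R}
    (hu : ∀ n, u (n + 2) = a (n + 1) * u (n + 1) + u n)
    (hv : ∀ n, v (n + 2) = a (n + 1) * v (n + 1) + v n) (n : ℕ) :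
    u (n + 1) * v n - u n * v (n + 1) = (-1) ^ n * (u 1 * v 0 - u 0 * v 1) := by
  induction n with
  | zero => ring
  | succ n ih =>
    calc u (n + 2) * v (n + 1) - u (n + 1) * v (n + 2)
        = -(u (n + 1) * v n - u n * v (n + 1)) := by rw [hu, hv]; ring
      _ = (-1) ^ (n + 1) * (u 1 * v 0 - u 0 * v 1) := by rw [ih]; ring

theorem mul_add_of_recurrence_eq_prod {K : Type*} [Field K] {zs a u : ℕ → K}
    (hzs : ∀ n, zs (n + 1) ≠ 0) (ha : ∀ n, a n = zs n - (zs (n + 1))⁻¹)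
    (hu : ∀ n, u (n + 2) = a (n + 1) * u (n + 1) + u n) (n : ℕ) :
    zs (n + 1) * u (n + 1) + u n = (∏ k ∈ range n, zs (k + 2)) * (zs 1 * u 1 + u 0) := by
  induction n with
  | zero => simp
  | succ n ih =>
    have hz := hzs (n + 1)
    calc zs (n + 2) * u (n + 2) + u (n + 1)
        = zs (n + 2) * (zs (n + 1) * u (n + 1) + u n) := by
          rw [hu, ha]; field_simp; ring
      _ = _ := by rw [ih, prod_range_succ]; ring

namespace IsQPair

theorem p_mem {R : Type*} [Ring R] {S : Subring R} {a p q : ℕ → R} (hpq : IsQPair a p q)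
    (ha : ∀ n, a n ∈ S) (n : ℕ) : p n ∈ S :=
  S.mem_of_recurrence ha hpq.p_succ_succ (hpq.p_zero ▸ S.one_mem) (hpq.p_one ▸ ha 0) n

theorem q_mem {R : Type*} [Ring R] {S : Subring R} {a p q : ℕ → R} (hpq : IsQPair a p q)
    (ha : ∀ n, a n ∈ S) (n : ℕ) : q n ∈ S :=
  S.mem_of_recurrence ha hpq.q_succ_succ (hpq.q_zero ▸ S.zero_mem) (hpq.q_one ▸ S.one_mem) n

variable {K : Type*} [Field K] {zs a p q : ℕ → K}

theorem zs_mul_q_add_eq_prod (hpq : IsQPair a p q) (hzs : ∀ n, zs (n + 1) ≠ 0)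
    (ha : ∀ n, a n = zs n - (zs (n + 1))⁻¹) (n : ℕ) :
    zs (n + 1) * q (n + 1) + q n = ∏ k ∈ range (n + 1), zs (k + 1) := by
  rw [mul_add_of_recurrence_eq_prod hzs ha hpq.q_succ_succ, prod_range_succ', hpq.q_one,
    hpq.q_zero]
  ring

theorem zs_mul_p_add_eq (hpq : IsQPair a p q) (hzs : ∀ n, zs (n + 1) ≠ 0)
    (ha : ∀ n, a n = zs n - (zs (n + 1))⁻¹) (n : ℕ) :
    zs (n + 1) * p (n + 1) + p n = zs 0 * (zs (n + 1) * q (n + 1) + q n) := by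
  have hz := hzs 0
  rw [mul_add_of_recurrence_eq_prod hzs ha hpq.p_succ_succ,
    mul_add_of_recurrence_eq_prod hzs ha hpq.q_succ_succ, hpq.p_one, hpq.p_zero, hpq.q_one,
    hpq.q_zero, ha 0]
  field_simp
  ring

theorem q_mul_sub_p_mul_eq (hpq : IsQPair a p q) (hzs : ∀ n, zs (n + 1) ≠ 0)
    (ha : ∀ n, a n = zs n - (zs (n + 1))⁻¹) (n : ℕ) :
    (q (n + 1) * zs 0 - p (n + 1)) * (zs (n + 1) * q (n + 1) + q n) = (-1) ^ n := by
  have hdet := mul_sub_mul_of_recurrence hpq.p_succ_succ hpq.q_succ_succ n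
  rw [hpq.p_one, hpq.p_zero, hpq.q_one, hpq.q_zero] at hdet
  calc (q (n + 1) * zs 0 - p (n + 1)) * (zs (n + 1) * q (n + 1) + q n)
      = q (n + 1) * (zs (n + 1) * p (n + 1) + p n)
          - p (n + 1) * (zs (n + 1) * q (n + 1) + q n) := by
        rw [hpq.zs_mul_p_add_eq hzs ha]; ring
    _ = -(p (n + 1) * q n - p n * q (n + 1)) := by ring
    _ = (-1) ^ n := by rw [hdet]; ring

end IsQPair

theorem pow_le_norm_prod {K : Type*} [NormedField K] {zs : ℕ → K} {c : ℝ} (hc : 0 ≤ c)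
    (hzs : ∀ n, c ≤ ‖zs (n + 1)‖) (n : ℕ) : c ^ n ≤ ‖∏ k ∈ range n, zs (k + 1)‖ := by
  rw [norm_prod]
  calc c ^ n = ∏ _k ∈ range n, c := by rw [prod_const, card_range]
    _ ≤ _ := prod_le_prod (fun _ _ => hc) (fun k _ => hzs k)

theorem mul_norm_le_norm_mul_add {K : Type*} [NormedField K] {w x y : K} {α : ℝ}
    (hw : 1 + α ≤ ‖w‖) (hxy : ‖y‖ ≤ ‖x‖) : α * ‖x‖ ≤ ‖w * x + y‖ := by
  have := norm_sub_norm_le (w * x) (-y)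
  rw [sub_neg_eq_add, norm_neg, norm_mul] at this
  nlinarith [norm_nonneg x]

theorem norm_sub_div_eq {K : Type*} [NormedField K] (z : K) {p q : K} (hq : q ≠ 0) :
    ‖z - p / q‖ = ‖q * z - p‖ / ‖q‖ := by
  rw [← norm_div]; congr 1; field_simp

theorem qpair_discrete_subring_general (z : ℂ) (zs : ℕ → ℂ)
    (hzs0 : zs 0 = z) (hzsne : ∀ n, zs n ≠ 0)
    (a : ℕ → ℂ) (haz : ∀ n, a n = zs n - (zs (n + 1))⁻¹)
    (Γ : Subring ℂ) (hΓdisc : DiscreteTopology Γ)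
    (haΓ : ∀ n, a n ∈ Γ)
    (α : ℝ) (hα : 0 < α)
    (hzsabs : ∀ n, 1 ≤ n → 1 + α ≤ ‖zs n‖)
    (p q : ℕ → ℂ)
    (hp0 : p 0 = 1) (hp1 : p 1 = a 0)
    (hp : ∀ n, p (n + 2) = a (n + 1) * p (n + 1) + p n)
    (hq0 : q 0 = 0) (hq1 : q 1 = 1)
    (hq : ∀ n, q (n + 2) = a (n + 1) * q (n + 1) + q n) :
    (∀ n : ℕ, q (n + 1) ≠ 0) ∧
    Filter.Tendsto (fun n => p (n + 1) / q (n + 1)) Filter.atTop (nhds z) ∧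
    (∀ n : ℕ, ‖q n‖ < ‖q (n + 1)‖ →
      ‖z - p (n + 1) / q (n + 1)‖ ≤ α⁻¹ * (‖q (n + 1)‖ ^ 2)⁻¹) := by
  subst hzs0
  have hpq : IsQPair a p q := ⟨hp0, hp1, hp, hq0, hq1, hq⟩
  have hzs : ∀ n, zs (n + 1) ≠ 0 := fun n => hzsne (n + 1)
  have hzs_norm : ∀ n, 1 + α ≤ ‖zs (n + 1)‖ := fun n => hzsabs (n + 1) n.succ_pos
  set W : ℕ → ℂ := fun n => zs (n + 1) * q (n + 1) + q n with hW
  have hW_norm : ∀ n, (1 + α) ^ (n + 1) ≤ ‖W n‖ := fun n => by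
    simpa only [hW, hpq.zs_mul_q_add_eq_prod hzs haz] using
      pow_le_norm_prod (by linarith) hzs_norm _
  have hW_gt : ∀ n, 1 < ‖W n‖ := fun n =>
    (one_lt_pow₀ (by linarith) n.succ_ne_zero).trans_le (hW_norm n)
  have herr : ∀ n, ‖q (n + 1) * zs 0 - p (n + 1)‖ * ‖W n‖ = 1 := fun n => by
    simpa using congrArg norm (hpq.q_mul_sub_p_mul_eq hzs haz n)
  have hq_ne : ∀ n, q (n + 1) ≠ 0 := by
    intro n hqn
    have hpn : ‖p (n + 1)‖ * ‖W n‖ = 1 := by simpa [hqn] using herr n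
    have hp_ne : p (n + 1) ≠ 0 := by rintro h; simp [h] at hpn
    have := Γ.one_le_norm_of_mem (hpq.p_mem haΓ (n + 1)) hp_ne
    nlinarith [hW_gt n]
  have hdist : ∀ n, ‖zs 0 - p (n + 1) / q (n + 1)‖ = (‖q (n + 1)‖ * ‖W n‖)⁻¹ := fun n => by
    rw [norm_sub_div_eq _ (hq_ne n), mul_inv, ← eq_inv_of_mul_eq_one_left (herr n)]; ring
  have hq_norm : ∀ n, 1 ≤ ‖q (n + 1)‖ := fun n =>
    Γ.one_le_norm_of_mem (hpq.q_mem haΓ (n + 1)) (hq_ne n)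
  refine ⟨hq_ne, ?_, fun n hlt => ?_⟩
  · have hbound : ∀ n, ‖p (n + 1) / q (n + 1) - zs 0‖ ≤ ((1 + α)⁻¹) ^ (n + 1) := fun n => by
      rw [norm_sub_rev, hdist, inv_pow]
      exact inv_anti₀ (by positivity)
        ((hW_norm n).trans (le_mul_of_one_le_left (norm_nonneg _) (hq_norm n)))
    have hgeo : Tendsto (fun n : ℕ => ((1 + α)⁻¹) ^ (n + 1)) atTop (𝓝 0) :=
      (tendsto_pow_atTop_nhds_zero_of_lt_one (by positivity)
        (inv_lt_one_of_one_lt₀ (by linarith))).comp (tendsto_add_atTop_nat 1)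
    rw [tendsto_iff_norm_sub_tendsto_zero]
    exact squeeze_zero (fun _ => norm_nonneg _) hbound hgeo
  · have hq_pos : 0 < ‖q (n + 1)‖ := (norm_nonneg _).trans_lt hlt
    have hW_ge : α * ‖q (n + 1)‖ ≤ ‖W n‖ := mul_norm_le_norm_mul_add (hzs_norm n) hlt.le
    calc ‖zs 0 - p (n + 1) / q (n + 1)‖ = (‖q (n + 1)‖ * ‖W n‖)⁻¹ := hdist n
      _ ≤ (‖q (n + 1)‖ * (α * ‖q (n + 1)‖))⁻¹ :=
        inv_anti₀ (by positivity) (mul_le_mul_of_nonneg_left hW_ge hq_pos.le)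
      _ = α⁻¹ * (‖q (n + 1)‖ ^ 2)⁻¹ := by rw [← mul_inv]; ring_nf

/-- Proposition 2: for an iteration sequence `zs` for `z` whose partial
quotients lie in a discrete subring `Γ` of `ℂ` and with `|zₙ| ≥ 1 + α`
for all `n ≥ 1` (for some `α > 0`), the denominators `qₙ` are nonzero,
the convergents tend to `z`, and whenever `|q₍ₙ₋₁₎| < |qₙ|` one has
`|z − pₙ/qₙ| ≤ α⁻¹ |qₙ|⁻²`.  (Q-pairs are indexed with offset one.) -/
theorem qpair_discrete_subring (z : ℂ) (hz : z ≠ 0) (zs : ℕ → ℂ)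
    (hzs0 : zs 0 = z) (hzsne : ∀ n, zs n ≠ 0)
    (hzsinv : ∀ n, 1 ≤ n → zs (n + 1) ≠ (zs n)⁻¹)
    (a : ℕ → ℂ) (haz : ∀ n, a n = zs n - (zs (n + 1))⁻¹)
    (Γ : Subring ℂ) (hΓdisc : DiscreteTopology Γ)
    (haΓ : ∀ n, a n ∈ Γ)
    (α : ℝ) (hα : 0 < α)
    (hzsabs : ∀ n, 1 ≤ n → 1 + α ≤ ‖zs n‖)
    (p q : ℕ → ℂ)
    (hp0 : p 0 = 1) (hp1 : p 1 = a 0)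
    (hp : ∀ n, p (n + 2) = a (n + 1) * p (n + 1) + p n)
    (hq0 : q 0 = 0) (hq1 : q 1 = 1)
    (hq : ∀ n, q (n + 2) = a (n + 1) * q (n + 1) + q n) :
    (∀ n : ℕ, q (n + 1) ≠ 0) ∧
    Filter.Tendsto (fun n => p (n + 1) / q (n + 1)) Filter.atTop (nhds z) ∧
    (∀ n : ℕ, ‖q n‖ < ‖q (n + 1)‖ →
      ‖z - p (n + 1) / q (n + 1)‖ ≤ α⁻¹ * (‖q (n + 1)‖ ^ 2)⁻¹) :=
  qpair_discrete_subring_general z zs hzs0 hzsne a haz Γ hΓdisc haΓ α hα hzsabs p q hp0 hp1 hp hq0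
    hq1 hq
end

section
/- Let (a_n)_{n≥0} be a sequence in ℂ satisfying Condition 𝒞, and let (p_n), (q_n) be the corresponding Q-pair. Then |q_{n+1}| > |q_n| for all n ≥ 1. -/
/-!
Write `x = qₙ`, `y = qₙ₋₁` and `u = qₙ₊₁ = A x + y` with `A = aₙ`, `b = aₙ₊₁`, so that
`qₙ₊₂ = b u + x`; by induction `|y| < |x| < |u|`. If `|b| ≥ 2`, then `|b u + x| ≥ 2|u| - |x| > |u|`.
Otherwise put `s = |b|² - 1 > 0`. The identity
`|s u + b̄ x|² - |x|² = s (|b u + x|² - |u|²)` reduces the claim to `|s u + b̄ x| > |x|`, and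
since `s u + b̄ x = (s A + b̄) x + s y`, Condition 𝒞 gives
`|s u + b̄ x| ≥ |b|² |x| - s |y| > |b|² |x| - s |x| = |x|`.
-/
open ComplexConjugate

lemma norm_lt_norm_mul_add_of_two_le_norm {𝕜 : Type*} [NormedDivisionRing 𝕜] {b x y : 𝕜}
    (hb : 2 ≤ ‖b‖) (hyx : ‖y‖ < ‖x‖) : ‖x‖ < ‖b * x + y‖ :=
  calc ‖x‖ < 2 * ‖x‖ - ‖y‖ := by linarith
    _ ≤ ‖b * x‖ - ‖y‖ := by rw [norm_mul]; gcongr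
    _ ≤ ‖b * x + y‖ := norm_sub_le_norm_add _ _

lemma sq_norm_real_mul_add_conj_mul_sub_sq_norm (b u x : ℂ) :
    ‖((‖b‖ ^ 2 - 1 : ℝ) : ℂ) * u + conj b * x‖ ^ 2 - ‖x‖ ^ 2 =
      (‖b‖ ^ 2 - 1) * (‖b * u + x‖ ^ 2 - ‖u‖ ^ 2) := by
  simp only [Complex.sq_norm, Complex.normSq_apply, Complex.ofReal_sub, Complex.ofReal_mul, Complex.ofReal_add, Complex.ofReal_one,
    Complex.add_re, Complex.add_im, Complex.sub_re, Complex.sub_im, Complex.mul_re, Complex.mul_im,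
    Complex.ofReal_re, Complex.ofReal_im, Complex.one_re, Complex.one_im, Complex.conj_re,
    Complex.conj_im]
  ring

lemma norm_lt_norm_mul_add_of_condition {b A x y : ℂ} (hb : 1 < ‖b‖) (hyx : ‖y‖ < ‖x‖)
    (hcond : ‖b‖ ^ 2 ≤ ‖((‖b‖ ^ 2 - 1 : ℝ) : ℂ) * A + conj b‖) :
    ‖A * x + y‖ < ‖b * (A * x + y) + x‖ := by
  set s : ℝ := ‖b‖ ^ 2 - 1
  have hs : 0 < s := by nlinarith
  have hlower : ‖x‖ < ‖(s : ℂ) * (A * x + y) + conj b * x‖ :=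
    calc ‖x‖ = ‖b‖ ^ 2 * ‖x‖ - s * ‖x‖ := by ring
      _ < ‖b‖ ^ 2 * ‖x‖ - s * ‖y‖ := by gcongr
      _ ≤ ‖((s : ℂ) * A + conj b) * x‖ - ‖(s : ℂ) * y‖ := by
        rw [norm_mul, norm_mul, Complex.norm_real, Real.norm_of_nonneg hs.le]
        gcongr
      _ ≤ ‖((s : ℂ) * A + conj b) * x + (s : ℂ) * y‖ := norm_sub_le_norm_add _ _
      _ = ‖(s : ℂ) * (A * x + y) + conj b * x‖ := by ring_nf
  have hpos : 0 < s * (‖b * (A * x + y) + x‖ ^ 2 - ‖A * x + y‖ ^ 2) := by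
    rw [← sq_norm_real_mul_add_conj_mul_sub_sq_norm]
    nlinarith [norm_nonneg x]
  exact lt_of_pow_lt_pow_left₀ 2 (norm_nonneg _) (by nlinarith)

theorem condition_C_monotone_general (a q : ℕ → ℂ)
    (hC1 : ∀ n : ℕ, 1 ≤ n → 1 < ‖a n‖)
    (hC2 : ∀ n : ℕ, 1 ≤ n → ‖a (n + 1)‖ < 2 →
      ‖a (n + 1)‖ ^ 2 ≤
        ‖((‖a (n + 1)‖ ^ 2 - 1 : ℝ) : ℂ) * a n +
          (starRingEnd ℂ) (a (n + 1))‖)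
    (hq0 : q 0 = 0) (hq1 : q 1 = 1)
    (hq : ∀ n, q (n + 2) = a (n + 1) * q (n + 1) + q n) :
    ∀ n : ℕ, 1 ≤ n → ‖q (n + 1)‖ < ‖q (n + 2)‖ := by
  have step (k : ℕ) (h₀ : ‖q k‖ < ‖q (k + 1)‖) (h₁ : ‖q (k + 1)‖ < ‖q (k + 2)‖) :
      ‖q (k + 2)‖ < ‖q (k + 3)‖ := by
    rw [hq (k + 1)]
    rcases le_or_gt 2 ‖a (k + 2)‖ with hbig | hsmall
    · exact norm_lt_norm_mul_add_of_two_le_norm hbig h₁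
    · rw [hq k]
      exact norm_lt_norm_mul_add_of_condition (hC1 (k + 2) (by omega)) h₀
        (hC2 (k + 1) (by omega) hsmall)
  have increasing (k : ℕ) : ‖q k‖ < ‖q (k + 1)‖ ∧ ‖q (k + 1)‖ < ‖q (k + 2)‖ := by
    induction k with
    | zero => simpa [hq0, hq1, hq 0] using hC1 1 le_rfl
    | succ k ih => exact ⟨ih.2, step k ih.1 ih.2⟩
  exact fun n _ => (increasing n).2

/-- Monotonicity of denominators under Condition 𝒞: if `|aₙ| > 1` for all
`n ≥ 1`, and whenever `n ≥ 1` and `|a₍ₙ₊₁₎| < 2` one has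
`|(|a₍ₙ₊₁₎|² − 1) aₙ + conj a₍ₙ₊₁₎| ≥ |a₍ₙ₊₁₎|²`, then `|q₍ₙ₊₁₎| > |qₙ|`
for all `n ≥ 1`.  (Q-pairs are indexed with offset one, so `q (n+1) = qₙ`.) -/
theorem condition_C_monotone (a p q : ℕ → ℂ)
    (hC1 : ∀ n : ℕ, 1 ≤ n → 1 < ‖a n‖)
    (hC2 : ∀ n : ℕ, 1 ≤ n → ‖a (n + 1)‖ < 2 →
      ‖a (n + 1)‖ ^ 2 ≤
        ‖((‖a (n + 1)‖ ^ 2 - 1 : ℝ) : ℂ) * a n +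
          (starRingEnd ℂ) (a (n + 1))‖)
    (hp0 : p 0 = 1) (hp1 : p 1 = a 0)
    (hp : ∀ n, p (n + 2) = a (n + 1) * p (n + 1) + p n)
    (hq0 : q 0 = 0) (hq1 : q 1 = 1)
    (hq : ∀ n, q (n + 2) = a (n + 1) * q (n + 1) + q n) :
    ∀ n : ℕ, 1 ≤ n → ‖q (n + 1)‖ < ‖q (n + 2)‖ :=
  condition_C_monotone_general a q hC1 hC2 hq0 hq1 hq
end

section
/- Let K be a subfield of ℂ, let z ∈ ℂ \ K, and let (z_n)_{n≥0} be an iteration sequence for z such that |z_n| > 1 for all n ≥ 1. Suppose the associated partial quotients a_n = z_n − z_{n+1}^{-1}, n ≥ 0, are all contained in a discrete subring Γ of ℂ with Γ ⊆ K. If z_m = z_n for some 0 ≤ m < n, then z is a quadratic surd over K. -/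
/-!
Writing `z_k = a_k + 1 / z_{k+1}` and composing these Möbius maps gives
`z_{m+j} = (α z_m + β) / (γ z_m + δ)` with `α, β, γ, δ ∈ K`, `αδ - βγ = (-1)^j`, and denominator
`γ z_m + δ = 1 / (z_{m+1} ⋯ z_{m+j})`, of absolute value `< 1` as soon as `j ≥ 1`.
If `z_m = z_n`, then `z_m` is a root of `γ X² + (δ - α) X - β`. This polynomial is not zero, since
otherwise the denominator would be `α` with `α² = ±1`. Pulling the quadratic back along
`z_k = a_k + 1 / z_{k+1}` gives a quadratic for `z = z_0`, and `z ∉ K` makes its leading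
coefficient nonzero.
-/

open Finset

namespace Subfield

variable {L : Type*} [Field L] (K : Subfield L)

def IsRootOfNonzeroQuadratic (x : L) : Prop :=
  ∃ A ∈ K, ∃ B ∈ K, ∃ C ∈ K, ¬(A = 0 ∧ B = 0 ∧ C = 0) ∧ A * x ^ 2 + B * x + C = 0

variable {K}

theorem IsRootOfNonzeroQuadratic.add_inv {a w : L} (ha : a ∈ K) (hw : w ≠ 0)
    (h : K.IsRootOfNonzeroQuadratic w) : K.IsRootOfNonzeroQuadratic (a + w⁻¹) := by
  obtain ⟨A, hA, B, hB, C, hC, hABC, hroot⟩ := h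
  refine ⟨C, hC, B - C * a - C * a, K.sub_mem (K.sub_mem hB (K.mul_mem hC ha)) (K.mul_mem hC ha),
    A - B * a + C * a ^ 2,
    K.add_mem (K.sub_mem hA (K.mul_mem hB ha)) (K.mul_mem hC (K.pow_mem ha 2)), ?_, ?_⟩
  · rintro ⟨rfl, hB0, hA0⟩
    exact hABC ⟨by linear_combination hA0 + a * hB0, by linear_combination hB0, rfl⟩
  · field_simp
    linear_combination hroot

theorem IsRootOfNonzeroQuadratic.exists_leading_ne_zero {x : L}
    (h : K.IsRootOfNonzeroQuadratic x) (hx : x ∉ K) :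
    ∃ A B C : L, A ∈ K ∧ B ∈ K ∧ C ∈ K ∧ A ≠ 0 ∧ A * x ^ 2 + B * x + C = 0 := by
  obtain ⟨A, hA, B, hB, C, hC, hABC, hroot⟩ := h
  refine ⟨A, B, C, hA, hB, hC, ?_, hroot⟩
  rintro rfl
  by_cases hB0 : B = 0
  · subst hB0
    exact hABC ⟨rfl, rfl, by linear_combination hroot⟩
  · refine hx ?_
    have hxC : x = -(B⁻¹ * C) := by
      field_simp
      linear_combination hroot
    exact hxC ▸ K.neg_mem (K.mul_mem (K.inv_mem hB) hC)

theorem IsRootOfNonzeroQuadratic.of_eq_add_inv {zs a : ℕ → L} (ha : ∀ k, a k ∈ K)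
    (hne : ∀ k, zs (k + 1) ≠ 0) (hrec : ∀ k, zs k = a k + (zs (k + 1))⁻¹) (k i : ℕ)
    (h : K.IsRootOfNonzeroQuadratic (zs (k + i))) : K.IsRootOfNonzeroQuadratic (zs k) := by
  induction i generalizing k with
  | zero => exact h
  | succ i ih =>
    rw [hrec k]
    exact (ih (k + 1) (by rwa [Nat.add_right_comm])).add_inv (ha k) (hne k)

end Subfield

theorem Subfield.isRootOfNonzeroQuadratic_of_mobius_fixed {𝕜 : Type*} [NormedField 𝕜]
    {K : Subfield 𝕜} {α β γ δ x : 𝕜} (hα : α ∈ K) (hβ : β ∈ K) (hγ : γ ∈ K) (hδ : δ ∈ K)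
    (hdet : ‖α * δ - β * γ‖ = 1) (hden : ‖γ * x + δ‖ < 1)
    (hfix : α * x + β = (γ * x + δ) * x) : K.IsRootOfNonzeroQuadratic x := by
  refine ⟨γ, hγ, δ - α, K.sub_mem hδ hα, -β, K.neg_mem hβ, ?_, by linear_combination -hfix⟩
  rintro ⟨rfl, hδα, hβ0⟩
  obtain rfl : δ = α := sub_eq_zero.mp hδα
  obtain rfl : β = 0 := neg_eq_zero.mp hβ0
  have hnorm : ‖δ‖ = 1 := by
    rw [mul_zero, sub_zero, norm_mul] at hdet
    nlinarith [norm_nonneg δ]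
  simp [hnorm] at hden

theorem Subring.exists_mobius_of_eq_add_inv {L : Type*} [Field L] (S : Subring L) {w b : ℕ → L}
    (hb : ∀ i, b i ∈ S) (hne : ∀ i, w (i + 1) ≠ 0) (hrec : ∀ i, w i = b i + (w (i + 1))⁻¹)
    (j : ℕ) :
    ∃ α ∈ S, ∃ β ∈ S, ∃ γ ∈ S, ∃ δ ∈ S, α * δ - β * γ = (-1) ^ j ∧
      γ * w 0 + δ = (∏ i ∈ range j, w (i + 1))⁻¹ ∧ α * w 0 + β = (γ * w 0 + δ) * w j := by
  induction j with
  | zero => exact ⟨1, S.one_mem, 0, S.zero_mem, 0, S.zero_mem, 1, S.one_mem, by simp⟩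
  | succ j ih =>
    obtain ⟨α, hα, β, hβ, γ, hγ, δ, hδ, hdet, hden, hmob⟩ := ih
    have hden' : (α - b j * γ) * w 0 + (β - b j * δ) = (γ * w 0 + δ) * (w (j + 1))⁻¹ := by
      rw [show (w (j + 1))⁻¹ = w j - b j by rw [hrec j]; ring]
      linear_combination hmob
    refine ⟨γ, hγ, δ, hδ, α - b j * γ, S.sub_mem hα (S.mul_mem (hb j) hγ),
      β - b j * δ, S.sub_mem hβ (S.mul_mem (hb j) hδ),
      by rw [pow_succ]; linear_combination -hdet, ?_, ?_⟩
    · rw [hden', prod_range_succ, mul_inv, hden]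
    · rw [hden', inv_mul_cancel_right₀ (hne j)]

theorem one_lt_norm_prod_range {𝕜 : Type*} [NormedField 𝕜] {f : ℕ → 𝕜} (hf : ∀ i, 1 < ‖f i‖)
    {j : ℕ} (hj : 0 < j) : 1 < ‖∏ i ∈ range j, f i‖ := by
  obtain ⟨k, rfl⟩ := Nat.exists_eq_succ_of_ne_zero hj.ne'
  rw [prod_range_succ', norm_mul, norm_prod]
  calc 1 < ‖f 0‖ := hf 0
    _ ≤ (∏ i ∈ range k, ‖f (i + 1)‖) * ‖f 0‖ :=
      le_mul_of_one_le_left (norm_nonneg _) (one_le_prod fun i _ => (hf (i + 1)).le)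

theorem periodic_implies_quadratic_surd_general (K : Subfield ℂ)
    (z : ℂ) (hzK : z ∉ K)
    (zs : ℕ → ℂ) (hzs0 : zs 0 = z)
    (hzsabs : ∀ n, 1 ≤ n → 1 < ‖zs n‖)
    (a : ℕ → ℂ) (haz : ∀ n, a n = zs n - (zs (n + 1))⁻¹)
    (Γ : Subring ℂ)
    (hΓK : (Γ : Set ℂ) ⊆ (K : Set ℂ))
    (haΓ : ∀ n, a n ∈ Γ)
    (m n : ℕ) (hmn : m < n) (hzmn : zs m = zs n) :
    z ∉ K ∧ ∃ A B C : ℂ, A ∈ K ∧ B ∈ K ∧ C ∈ K ∧ A ≠ 0 ∧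
      A * z ^ 2 + B * z + C = 0 := by
  have haK : ∀ k, a k ∈ K := fun k => hΓK (haΓ k)
  have habs : ∀ k, 1 < ‖zs (k + 1)‖ := fun k => hzsabs (k + 1) k.succ_pos
  have hne : ∀ k, zs (k + 1) ≠ 0 := fun k => norm_pos_iff.mp (one_pos.trans (habs k))
  have hrec : ∀ k, zs k = a k + (zs (k + 1))⁻¹ := fun k => by rw [haz]; ring
  obtain ⟨α, hα, β, hβ, γ, hγ, δ, hδ, hdet, hden, hmob⟩ :=
    K.toSubring.exists_mobius_of_eq_add_inv (w := fun i => zs (m + i)) (fun i => haK (m + i))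
      (fun i => hne (m + i)) (fun i => hrec (m + i)) (n - m)
  simp only [add_zero] at hden hmob
  have hperiod : zs (m + (n - m)) = zs m := by rw [Nat.add_sub_cancel' hmn.le, hzmn]
  have hroot : K.IsRootOfNonzeroQuadratic (zs m) := by
    refine Subfield.isRootOfNonzeroQuadratic_of_mobius_fixed hα hβ hγ hδ (by simp [hdet]) ?_ ?_
    · rw [hden, norm_inv]
      exact inv_lt_one_of_one_lt₀ (one_lt_norm_prod_range (fun i => habs (m + i)) (by omega))
    · simpa [hperiod] using hmob
  have hz : K.IsRootOfNonzeroQuadratic z := by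
    rw [← hzs0]
    exact .of_eq_add_inv haK hne hrec 0 m (by rwa [zero_add])
  exact ⟨hzK, hz.exists_leading_ne_zero hzK⟩

/-- Proposition (direct half of Lagrange): if an iteration sequence for `z`
with `|zₙ| > 1` for `n ≥ 1`, whose partial quotients lie in a discrete subring
`Γ ⊆ K`, satisfies `z_m = z_n` for some `m < n`, then `z` is a quadratic surd
over `K`. -/
theorem periodic_implies_quadratic_surd (K : Subfield ℂ)
    (z : ℂ) (hz : z ≠ 0) (hzK : z ∉ K)
    (zs : ℕ → ℂ) (hzs0 : zs 0 = z) (hzsne : ∀ n, zs n ≠ 0)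
    (hzsabs : ∀ n, 1 ≤ n → 1 < ‖zs n‖)
    (hzsinv : ∀ n, 1 ≤ n → zs (n + 1) ≠ (zs n)⁻¹)
    (a : ℕ → ℂ) (haz : ∀ n, a n = zs n - (zs (n + 1))⁻¹)
    (Γ : Subring ℂ) (hΓdisc : DiscreteTopology Γ)
    (hΓK : (Γ : Set ℂ) ⊆ (K : Set ℂ))
    (haΓ : ∀ n, a n ∈ Γ)
    (m n : ℕ) (hmn : m < n) (hzmn : zs m = zs n) :
    z ∉ K ∧ ∃ A B C : ℂ, A ∈ K ∧ B ∈ K ∧ C ∈ K ∧ A ≠ 0 ∧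
      A * z ^ 2 + B * z + C = 0 :=
  periodic_implies_quadratic_surd_general K z hzK zs hzs0 hzsabs a haz Γ hΓK haΓ m n hmn hzmn
end

section
/- Let Γ be a discrete subring of ℂ and K the subfield of ℂ generated by Γ (the quotient field of Γ). Let z be a quadratic surd over K, and let (z_n)_{n≥0} be an iteration sequence for z whose associated partial quotients (a_n)_{n≥0} are all contained in Γ. Let (p_n), (q_n) be the Q-pair corresponding to (a_n). Suppose: (i) there exists α > 0 such that |z_n| > 1 + α for all n ≥ 1; and (ii) |q_n| → ∞ as n → ∞. Then the set {z_n : n ≥ 0} is finite. -/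
/-!
Write `p_n, q_n` for the Q-pair and `f(x, y) = A x² + B x y + C y²` for an equation of `z`
with coefficients cleared into `Γ`. From `z = (p_n z_{n+1} + p_{n-1}) / (q_n z_{n+1} + q_{n-1})`
the complete quotient `z_{n+1}` is a root of
`f(p_n, q_n) X² + b_n X + f(p_{n-1}, q_{n-1})`, whose coefficients lie in `Γ`, whose leading
coefficient is nonzero because `z ∉ K`, and whose discriminant is that of `f` since
`p_n q_{n-1} - p_{n-1} q_n = ±1`. The bound `|z_n| > 1 + α` gives `|q_n z - p_n| ≤ 1` and
`|q_n z - p_n| |q_n| = O(1)`, hence a uniform bound on `f(p_n, q_n)` and, through the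
discriminant, on `b_n`. A discrete subring meets every ball in a finite set, so only finitely
many quadratics occur.
-/

theorem Subring.finite_setOf_mem_norm_le {E : Type*} [NormedRing E] [ProperSpace E]
    (Γ : Subring E) [DiscreteTopology Γ] (R : ℝ) : {x | x ∈ Γ ∧ ‖x‖ ≤ R}.Finite := by
  have : DiscreteTopology Γ.toAddSubgroup := ‹DiscreteTopology Γ›
  have hclosed : IsClosed (Γ : Set E) := AddSubgroup.isClosed_of_discrete (H := Γ.toAddSubgroup)
  have hball := Metric.finite_isBounded_inter_isClosed
    (DiscreteTopology.isDiscrete (s := (Γ : Set E))) (Metric.isBounded_closedBall (x := 0) (r := R))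
    hclosed
  refine hball.subset fun x ⟨hxΓ, hx⟩ => ⟨?_, hxΓ⟩
  simpa using hx

theorem Subring.exists_ne_zero_mul_mem_of_mem_closure {K : Type*} [Field K] {Γ : Subring K}
    {x : K} (hx : x ∈ Subfield.closure (Γ : Set K)) : ∃ d ∈ Γ, d ≠ 0 ∧ d * x ∈ Γ := by
  obtain ⟨u, hu, d, hd, rfl⟩ := Subfield.mem_closure_iff.mp hx
  rw [Subring.closure_eq] at hu hd
  rcases eq_or_ne d 0 with rfl | hd0
  · exact ⟨1, Γ.one_mem, one_ne_zero, by simp [Γ.zero_mem]⟩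
  · exact ⟨d, hd, hd0, by rwa [mul_div_cancel₀ _ hd0]⟩

theorem Subring.exists_quadratic_eq_zero_of_mem_closure {K : Type*} [Field K] {Γ : Subring K}
    {z : K} (h : ∃ A B C : K, A ∈ Subfield.closure (Γ : Set K) ∧ B ∈ Subfield.closure (Γ : Set K) ∧
      C ∈ Subfield.closure (Γ : Set K) ∧ A ≠ 0 ∧ A * z ^ 2 + B * z + C = 0) :
    ∃ A ∈ Γ, ∃ B ∈ Γ, ∃ C ∈ Γ, A ≠ 0 ∧ A * z ^ 2 + B * z + C = 0 := by
  obtain ⟨A, B, C, hA, hB, hC, hA0, hroot⟩ := h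
  obtain ⟨dA, hdA, hdA0, hA⟩ := exists_ne_zero_mul_mem_of_mem_closure hA
  obtain ⟨dB, hdB, hdB0, hB⟩ := exists_ne_zero_mul_mem_of_mem_closure hB
  obtain ⟨dC, hdC, hdC0, hC⟩ := exists_ne_zero_mul_mem_of_mem_closure hC
  refine ⟨dA * A * (dB * dC), Γ.mul_mem hA (Γ.mul_mem hdB hdC),
    dB * B * (dA * dC), Γ.mul_mem hB (Γ.mul_mem hdA hdC),
    dC * C * (dA * dB), Γ.mul_mem hC (Γ.mul_mem hdA hdB), by positivity, ?_⟩
  linear_combination dA * dB * dC * hroot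

open Polynomial in
theorem Set.finite_setOf_quadratic_eq_zero {R : Type*} [CommRing R] [IsDomain R] {u : R}
    (hu : u ≠ 0) (v w : R) : {x | u * x ^ 2 + v * x + w = 0}.Finite := by
  have hp : C u * X ^ 2 + C v * X + C w ≠ 0 :=
    ne_zero_of_natDegree_gt (n := 0) (by rw [natDegree_quadratic hu]; norm_num)
  simpa using finite_setOfPred_isRoot hp

def quadraticRoots {R : Type*} [CommRing R] (S : Set R) : Set R :=
  {x | ∃ u ∈ S, ∃ v ∈ S, ∃ w ∈ S, u ≠ 0 ∧ u * x ^ 2 + v * x + w = 0}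

theorem Set.Finite.quadraticRoots {R : Type*} [CommRing R] [IsDomain R] {S : Set R}
    (hS : S.Finite) : (quadraticRoots S).Finite := by
  refine ((hS.sdiff (t := {0})).biUnion fun u hu => hS.biUnion fun v _ => hS.biUnion fun w _ =>
    finite_setOf_quadratic_eq_zero hu.2 v w).subset ?_
  rintro x ⟨u, hu, v, hv, w, hw, hu0, hx⟩
  simp only [Set.mem_iUnion]
  exact ⟨u, ⟨hu, hu0⟩, v, hv, w, hw, hx⟩

section BinaryQuadraticForm

variable {R : Type*} [CommRing R] (A B C : R)

def binQuad (x y : R) : R := A * x ^ 2 + B * x * y + C * y ^ 2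

def binQuadPolar (x y x' y' : R) : R :=
  2 * A * x * x' + B * (x * y' + x' * y) + 2 * C * y * y'

theorem binQuad_mul_left_self (z y : R) :
    binQuad A B C (z * y) y = y ^ 2 * (A * z ^ 2 + B * z + C) := by
  unfold binQuad; ring

theorem binQuad_linear_subst (x y x' y' w : R) :
    binQuad A B C (x * w + x') (y * w + y') =
      binQuad A B C x y * w ^ 2 + binQuadPolar A B C x y x' y' * w + binQuad A B C x' y' := by
  unfold binQuad binQuadPolar; ring

theorem discrim_binQuad (x y x' y' : R) :
    discrim (binQuad A B C x y) (binQuadPolar A B C x y x' y') (binQuad A B C x' y') =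
      discrim A B C * (x * y' - x' * y) ^ 2 := by
  unfold binQuad binQuadPolar discrim; ring

variable {A B C}

theorem Subring.binQuad_mem {S : Subring R} (hA : A ∈ S) (hB : B ∈ S) (hC : C ∈ S) {x y : R}
    (hx : x ∈ S) (hy : y ∈ S) : binQuad A B C x y ∈ S := by
  unfold binQuad; aesop

theorem Subring.binQuadPolar_mem {S : Subring R} (hA : A ∈ S) (hB : B ∈ S) (hC : C ∈ S)
    {x y x' y' : R} (hx : x ∈ S) (hy : y ∈ S) (hx' : x' ∈ S) (hy' : y' ∈ S) :
    binQuadPolar A B C x y x' y' ∈ S := by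
  unfold binQuadPolar; aesop

theorem binQuad_ne_zero {L : Type*} [Field L] {K : Subfield L} {A B C z x y : L} (hz : z ∉ K)
    (hA : A ∈ K) (hB : B ∈ K) (hA0 : A ≠ 0) (hroot : A * z ^ 2 + B * z + C = 0)
    (hx : x ∈ K) (hy : y ∈ K) (hxy : x ≠ 0 ∨ y ≠ 0) : binQuad A B C x y ≠ 0 := by
  intro h
  rcases eq_or_ne y 0 with rfl | hy0
  · simp_all [binQuad]
  -- `x / y ∈ K` is a root as well, and the roots of the quadratic sum to `-B / A`
  have hsum : (z - x / y) * (A * (z + x / y) + B) = 0 := by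
    rw [← div_mul_cancel₀ x hy0, binQuad_mul_left_self] at h
    linear_combination hroot - (mul_eq_zero.mp h).resolve_left (pow_ne_zero 2 hy0)
  rcases mul_eq_zero.mp hsum with h1 | h2
  · exact hz (sub_eq_zero.mp h1 ▸ div_mem hx hy)
  · refine hz ?_
    have : z = -B / A - x / y := by
      rw [eq_sub_iff_add_eq, eq_div_iff hA0]; linear_combination h2
    rw [this]
    exact sub_mem (div_mem (neg_mem hB) hA) (div_mem hx hy)

end BinaryQuadraticForm

section Continuant

variable {R : Type*} [CommRing R] (a : ℕ → R)

/-- `continuant a 1 (a 0)` and `continuant a 0 1` are the Q-pair of `a` shifted by one: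
their `(n + 1)`-st terms are `p_n` and `q_n`. -/
def continuant (x y : R) : ℕ → R
  | 0 => x
  | 1 => y
  | n + 2 => a (n + 1) * continuant x y (n + 1) + continuant x y n

/-- The continuant with the complete quotient `w (n + 1)` substituted for the tail of `a`. -/
def continuantTail (x y : R) (w : ℕ → R) (n : ℕ) : R :=
  continuant a x y (n + 1) * w (n + 1) + continuant a x y n

variable {a}

theorem continuant_mem {S : Subring R} (ha : ∀ n, a n ∈ S) {x y : R} (hx : x ∈ S) (hy : y ∈ S) :
    ∀ n, continuant a x y n ∈ S
  | 0 => hx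
  | 1 => hy
  | n + 2 => S.add_mem (S.mul_mem (ha _) (continuant_mem ha hx hy (n + 1)))
      (continuant_mem ha hx hy n)

theorem continuant_casoratian (x y x' y' : R) (n : ℕ) :
    continuant a x y (n + 1) * continuant a x' y' n - continuant a x y n * continuant a x' y' (n + 1)
      = (-1) ^ n * (y * x' - x * y') := by
  induction n with
  | zero => simp only [continuant, pow_zero]; ring
  | succ n ih =>
    simp only [continuant, pow_succ]
    linear_combination -ih

theorem continuant_succ_ne_zero_or [Nontrivial R] (n : ℕ) :
    continuant a 1 (a 0) (n + 1) ≠ 0 ∨ continuant a 0 1 (n + 1) ≠ 0 := by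
  by_contra! h
  have := continuant_casoratian (a := a) 1 (a 0) 0 1 n
  simp only [h, zero_mul, mul_zero, sub_self, mul_one, zero_sub, mul_neg, zero_eq_neg] at this
  exact (isUnit_one.neg.pow n).ne_zero this

theorem discrim_binQuad_continuant (A B C : R) (n : ℕ) :
    discrim (binQuad A B C (continuant a 1 (a 0) (n + 1)) (continuant a 0 1 (n + 1)))
      (binQuadPolar A B C (continuant a 1 (a 0) (n + 1)) (continuant a 0 1 (n + 1))
        (continuant a 1 (a 0) n) (continuant a 0 1 n))
      (binQuad A B C (continuant a 1 (a 0) n) (continuant a 0 1 n)) = discrim A B C := by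
  rw [discrim_binQuad, continuant_casoratian]
  ring_nf
  simp

-- `w` is a sequence of complete quotients: `w n = a n + 1 / w (n + 1)`, denominators cleared.
variable {w : ℕ → R} (hw : ∀ n, a n * w (n + 1) + 1 = w n * w (n + 1))
include hw

theorem continuantTail_succ (x y : R) (n : ℕ) :
    continuantTail a x y w (n + 1) = w (n + 2) * continuantTail a x y w n := by
  simp only [continuantTail, continuant]
  linear_combination continuant a x y (n + 1) * hw (n + 1)

theorem continuantTail_num (n : ℕ) :
    continuantTail a 1 (a 0) w n = w 0 * continuantTail a 0 1 w n := by
  induction n with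
  | zero => simp only [continuantTail, continuant]; linear_combination hw 0
  | succ n ih => rw [continuantTail_succ hw, continuantTail_succ hw, ih]; ring

theorem continuant_sub_mul_continuantTail (n : ℕ) :
    (continuant a 0 1 (n + 1) * w 0 - continuant a 1 (a 0) (n + 1)) * continuantTail a 0 1 w n
      = (-1) ^ n := by
  have hcas := continuant_casoratian (a := a) 0 1 1 (a 0) n
  have hnum := continuantTail_num hw n
  simp only [continuantTail] at hnum ⊢
  linear_combination -continuant a 0 1 (n + 1) * hnum + hcas

theorem binQuad_continuant_root {A B C : R} (hroot : A * w 0 ^ 2 + B * w 0 + C = 0) (n : ℕ) :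
    binQuad A B C (continuant a 1 (a 0) (n + 1)) (continuant a 0 1 (n + 1)) * w (n + 1) ^ 2 +
      binQuadPolar A B C (continuant a 1 (a 0) (n + 1)) (continuant a 0 1 (n + 1))
        (continuant a 1 (a 0) n) (continuant a 0 1 n) * w (n + 1) +
      binQuad A B C (continuant a 1 (a 0) n) (continuant a 0 1 n) = 0 := by
  rw [← binQuad_linear_subst]
  change binQuad A B C (continuantTail a 1 (a 0) w n) (continuantTail a 0 1 w n) = 0
  rw [continuantTail_num hw, binQuad_mul_left_self, hroot, mul_zero]

end Continuant

section Norms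

variable {F : Type*} [NormedField F] {a w : ℕ → F}

theorem one_le_norm_continuantTail (hw : ∀ n, a n * w (n + 1) + 1 = w n * w (n + 1))
    (hw1 : ∀ n, 1 ≤ ‖w (n + 1)‖) (n : ℕ) : 1 ≤ ‖continuantTail a 0 1 w n‖ := by
  induction n with
  | zero => simpa [continuantTail, continuant] using hw1 0
  | succ n ih =>
    rw [continuantTail_succ hw, norm_mul]
    exact one_le_mul_of_one_le_of_one_le (hw1 (n + 1)) ih

theorem norm_continuant_le (hw : ∀ n, a n * w (n + 1) + 1 = w n * w (n + 1)) {r : ℝ} (hr : 1 < r)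
    (hwr : ∀ n, r ≤ ‖w (n + 1)‖) (n : ℕ) :
    ‖continuant a 0 1 (n + 1)‖ ≤ r / (r ^ 2 - 1) * ‖continuantTail a 0 1 w n‖ := by
  -- `M` is the fixed point of `M ↦ (1 + M / r) / r`, which is what the induction step needs
  set M := r / (r ^ 2 - 1)
  have hM : M * r ^ 2 = r + M := by
    have : r ^ 2 - 1 ≠ 0 := by nlinarith
    simp only [M]; field_simp; ring
  have hM0 : 0 < M := div_pos (by linarith) (by nlinarith)
  have hMr : 1 ≤ M * r := by nlinarith
  induction n with
  | zero =>
    simp only [continuantTail, continuant, zero_add, one_mul, add_zero, norm_one]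
    nlinarith [hwr 0]
  | succ n ih =>
    set W := ‖w (n + 2)‖
    set T := ‖continuantTail a 0 1 w n‖
    have hW : r ≤ W := hwr (n + 1)
    have hT : 0 ≤ T := norm_nonneg _
    -- `M * x ^ 2 - x - M` vanishes at `x = r` and increases for `x ≥ r`
    have hquad : W + M ≤ M * W ^ 2 := by
      have : 0 ≤ M * (W + r) - 1 := by nlinarith
      nlinarith [mul_nonneg (sub_nonneg.mpr hW) this]
    have htri : ‖continuant a 0 1 (n + 2)‖ * W ≤ W * T + ‖continuant a 0 1 (n + 1)‖ := by
      have h : continuant a 0 1 (n + 2) * w (n + 2) =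
          w (n + 2) * continuantTail a 0 1 w n - continuant a 0 1 (n + 1) := by
        rw [← continuantTail_succ hw]; unfold continuantTail; ring
      rw [← norm_mul, h, ← norm_mul]
      exact norm_sub_le _ _
    rw [continuantTail_succ hw, norm_mul]
    nlinarith

theorem norm_binQuad_le {A B C z : F} (hroot : A * z ^ 2 + B * z + C = 0) (x y : F) :
    ‖binQuad A B C x y‖ ≤ ‖y * z - x‖ * ‖y‖ * ‖2 * A * z + B‖ + ‖A‖ * ‖y * z - x‖ ^ 2 := by
  have h : binQuad A B C x y = -((y * z - x) * y * (2 * A * z + B)) + A * (y * z - x) ^ 2 := by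
    unfold binQuad; linear_combination y ^ 2 * hroot
  rw [h]
  refine (norm_add_le _ _).trans_eq ?_
  simp only [norm_neg, norm_mul, norm_pow]

theorem norm_binQuad_continuant_le {A B C : F}
    (hw : ∀ n, a n * w (n + 1) + 1 = w n * w (n + 1)) (hroot : A * w 0 ^ 2 + B * w 0 + C = 0)
    {r : ℝ} (hr : 1 < r) (hwr : ∀ n, r ≤ ‖w (n + 1)‖) (n : ℕ) :
    ‖binQuad A B C (continuant a 1 (a 0) n) (continuant a 0 1 n)‖ ≤
      r / (r ^ 2 - 1) * ‖2 * A * w 0 + B‖ + ‖A‖ := by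
  have hM : 0 ≤ r / (r ^ 2 - 1) := div_nonneg (by linarith) (by nlinarith)
  cases n with
  | zero =>
    have h0 : binQuad A B C (continuant a 1 (a 0) 0) (continuant a 0 1 0) = A := by
      simp [binQuad, continuant]
    rw [h0]
    exact le_add_of_nonneg_left (by positivity)
  | succ n =>
    set δ := continuant a 0 1 (n + 1) * w 0 - continuant a 1 (a 0) (n + 1)
    set D := ‖continuantTail a 0 1 w n‖
    have hδD : ‖δ‖ * D = 1 := by
      rw [← norm_mul, continuant_sub_mul_continuantTail hw]; simp
    have hD : 1 ≤ D := one_le_norm_continuantTail hw (fun k => by linarith [hwr k]) n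
    have hδ : ‖δ‖ ≤ 1 := by nlinarith [norm_nonneg δ]
    have hδq : ‖δ‖ * ‖continuant a 0 1 (n + 1)‖ ≤ r / (r ^ 2 - 1) := by
      calc ‖δ‖ * ‖continuant a 0 1 (n + 1)‖ ≤ ‖δ‖ * (r / (r ^ 2 - 1) * D) :=
            mul_le_mul_of_nonneg_left (norm_continuant_le hw hr hwr n) (norm_nonneg _)
        _ = r / (r ^ 2 - 1) := by rw [mul_left_comm, hδD, mul_one]
    refine (norm_binQuad_le hroot _ _).trans ?_
    exact add_le_add (mul_le_mul_of_nonneg_right hδq (norm_nonneg _))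
      (mul_le_of_le_one_right (norm_nonneg _) (pow_le_one₀ (norm_nonneg _) hδ))

end Norms

theorem norm_le_sqrt_of_discrim {𝕜 : Type*} [RCLike 𝕜] {a b c : 𝕜} {R : ℝ} (ha : ‖a‖ ≤ R)
    (hc : ‖c‖ ≤ R) : ‖b‖ ≤ √(4 * R ^ 2 + ‖discrim a b c‖) := by
  refine Real.le_sqrt_of_sq_le ?_
  have hb : b ^ 2 = 4 * a * c + discrim a b c := by unfold discrim; ring
  have hac : ‖a‖ * ‖c‖ ≤ R * R := mul_le_mul ha hc (norm_nonneg _) ((norm_nonneg _).trans ha)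
  calc ‖b‖ ^ 2 = ‖4 * a * c + discrim a b c‖ := by rw [← norm_pow, hb]
    _ ≤ 4 * (‖a‖ * ‖c‖) + ‖discrim a b c‖ := by
      refine (norm_add_le _ _).trans_eq ?_
      rw [norm_mul, norm_mul, RCLike.norm_ofNat, mul_assoc]
    _ ≤ 4 * R ^ 2 + ‖discrim a b c‖ := by nlinarith

theorem exists_bound_forall_mem_quadraticRoots {𝕜 : Type*} [RCLike 𝕜] {Γ : Subring 𝕜}
    {A B C : 𝕜} {a w : ℕ → 𝕜} (hA : A ∈ Γ) (hB : B ∈ Γ) (hC : C ∈ Γ) (hA0 : A ≠ 0)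
    (hroot : A * w 0 ^ 2 + B * w 0 + C = 0) (hirr : w 0 ∉ Subfield.closure (Γ : Set 𝕜))
    (ha : ∀ n, a n ∈ Γ) (hw : ∀ n, a n * w (n + 1) + 1 = w n * w (n + 1)) {r : ℝ} (hr : 1 < r)
    (hwr : ∀ n, r ≤ ‖w (n + 1)‖) :
    ∃ R : ℝ, ∀ n, w (n + 1) ∈ quadraticRoots {x | x ∈ Γ ∧ ‖x‖ ≤ R} := by
  set g := fun n => binQuad A B C (continuant a 1 (a 0) n) (continuant a 0 1 n)
  set R := r / (r ^ 2 - 1) * ‖2 * A * w 0 + B‖ + ‖A‖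
  have hg : ∀ n, ‖g n‖ ≤ R := norm_binQuad_continuant_le hw hroot hr hwr
  have hp : ∀ n, continuant a 1 (a 0) n ∈ Γ := continuant_mem ha Γ.one_mem (ha 0)
  have hq : ∀ n, continuant a 0 1 n ∈ Γ := continuant_mem ha Γ.zero_mem Γ.one_mem
  refine ⟨max R √(4 * R ^ 2 + ‖discrim A B C‖), fun n => ?_⟩
  have hb := norm_le_sqrt_of_discrim (b := binQuadPolar A B C (continuant a 1 (a 0) (n + 1))
    (continuant a 0 1 (n + 1)) (continuant a 1 (a 0) n) (continuant a 0 1 n)) (hg (n + 1)) (hg n)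
  rw [discrim_binQuad_continuant] at hb
  refine ⟨g (n + 1), ⟨Γ.binQuad_mem hA hB hC (hp _) (hq _), (hg _).trans (le_max_left _ _)⟩,
    _, ⟨Γ.binQuadPolar_mem hA hB hC (hp _) (hq _) (hp _) (hq _), hb.trans (le_max_right _ _)⟩,
    g n, ⟨Γ.binQuad_mem hA hB hC (hp _) (hq _), (hg _).trans (le_max_left _ _)⟩,
    ?_, binQuad_continuant_root hw hroot n⟩
  exact binQuad_ne_zero hirr (Subfield.subset_closure hA) (Subfield.subset_closure hB) hA0 hroot
    (Subfield.subset_closure (hp _)) (Subfield.subset_closure (hq _)) (continuant_succ_ne_zero_or n)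

theorem quadratic_surd_orbit_finite_general (Γ : Subring ℂ) (hΓdisc : DiscreteTopology Γ)
    (K : Subfield ℂ) (hK : K = Subfield.closure (Γ : Set ℂ))
    (z : ℂ) (hzK : z ∉ K)
    (hsurd : ∃ A B C : ℂ, A ∈ K ∧ B ∈ K ∧ C ∈ K ∧ A ≠ 0 ∧
      A * z ^ 2 + B * z + C = 0)
    (zs : ℕ → ℂ) (hzs0 : zs 0 = z)
    (a : ℕ → ℂ) (haz : ∀ n, a n = zs n - (zs (n + 1))⁻¹)
    (haΓ : ∀ n, a n ∈ Γ)
    (α : ℝ) (hα : 0 < α)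
    (hzsabs : ∀ n, 1 ≤ n → 1 + α < ‖zs n‖) :
    (Set.range zs).Finite := by
  subst hK hzs0
  obtain ⟨A, hA, B, hB, C, hC, hA0, hroot⟩ := Subring.exists_quadratic_eq_zero_of_mem_closure hsurd
  have hwr : ∀ n, 1 + α ≤ ‖zs (n + 1)‖ := fun n => (hzsabs (n + 1) n.succ_pos).le
  have hw : ∀ n, a n * zs (n + 1) + 1 = zs n * zs (n + 1) := fun n => by
    have : zs (n + 1) ≠ 0 := norm_pos_iff.mp (by linarith [hwr n])
    rw [haz]; field_simp; ring
  obtain ⟨R, hR⟩ := exists_bound_forall_mem_quadraticRoots hA hB hC hA0 hroot hzK haΓ hw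
    (by linarith) hwr
  refine ((Γ.finite_setOf_mem_norm_le R).quadraticRoots.insert (zs 0)).subset ?_
  rintro _ ⟨_ | n, rfl⟩
  exacts [Set.mem_insert _ _, Set.mem_insert_of_mem _ (hR n)]

/-- Lagrange-type theorem: if `z` is a quadratic surd over the subfield `K`
generated by a discrete subring `Γ` of `ℂ`, and `zs` is an iteration sequence
for `z` whose partial quotients lie in `Γ`, such that `|zₙ| > 1 + α` for all
`n ≥ 1` (some `α > 0`) and `|qₙ| → ∞`, then `{zₙ : n ≥ 0}` is finite.
(Q-pairs are indexed with offset one, so `q (n+1) = qₙ`.) -/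
theorem quadratic_surd_orbit_finite (Γ : Subring ℂ) (hΓdisc : DiscreteTopology Γ)
    (K : Subfield ℂ) (hK : K = Subfield.closure (Γ : Set ℂ))
    (z : ℂ) (hz : z ≠ 0) (hzK : z ∉ K)
    (hsurd : ∃ A B C : ℂ, A ∈ K ∧ B ∈ K ∧ C ∈ K ∧ A ≠ 0 ∧
      A * z ^ 2 + B * z + C = 0)
    (zs : ℕ → ℂ) (hzs0 : zs 0 = z) (hzsne : ∀ n, zs n ≠ 0)
    (hzsinv : ∀ n, 1 ≤ n → zs (n + 1) ≠ (zs n)⁻¹)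
    (a : ℕ → ℂ) (haz : ∀ n, a n = zs n - (zs (n + 1))⁻¹)
    (haΓ : ∀ n, a n ∈ Γ)
    (p q : ℕ → ℂ)
    (hp0 : p 0 = 1) (hp1 : p 1 = a 0)
    (hp : ∀ n, p (n + 2) = a (n + 1) * p (n + 1) + p n)
    (hq0 : q 0 = 0) (hq1 : q 1 = 1)
    (hq : ∀ n, q (n + 2) = a (n + 1) * q (n + 1) + q n)
    (α : ℝ) (hα : 0 < α)
    (hzsabs : ∀ n, 1 ≤ n → 1 + α < ‖zs n‖)
    (hqinf : Filter.Tendsto (fun n => ‖q (n + 1)‖) Filter.atTop Filter.atTop) :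
    (Set.range zs).Finite :=
  quadratic_surd_orbit_finite_general Γ hΓdisc K hK z hzK hsurd zs hzs0 a haz haΓ α hα hzsabs
end

section
/- Let 𝔈 be the ring of Eisenstein integers and let f : ℂ → 𝔈 be an 𝔈-valued algorithm with fundamental set Φ. Suppose: (a) Φ ⊆ B(0,r) for some 0 < r < 1; (b) |f(ζ)| > 1 for all ζ ∈ Φ^{−1} (the set of inverses of elements of Φ); and (c) for all 0 ≤ k ≤ 5 and all t ∈ {−1+j, j, 1+j}, the sets ρ^{−k}·t + (C_f(ρ^k·j))^{−1} and C_f(ρ^{−k}·t) ∩ Φ^{−1} are disjoint, where C_f(a) = {z ∈ ℂ : f(z) = a}. Let K be the subfield of ℂ generated by 𝔈, let z ∈ ℂ \ K, let (a_n)_{n≥0} be the partial quotients of z with respect to f, and (p_n), (q_n) the corresponding Q-pair. Then: (i) |q_n| > |q_{n−1}| for all n ≥ 1 (in particular q_n ≠ 0 for all n); (ii) p_n/q_n → z as n → ∞ and |z − p_n/q_n| ≤ (r/(1−r))·|q_n|^{−2} for all n; and (iii) z is a quadratic surd over K if and only if (a_n)_{n≥0} is eventually periodic. -/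
/-!
Write `zₙ` for the iteration sequence and `eₙ = qₙ z - pₙ`. The recursions give
`eₙ₊₁ zₙ₊₁ = -eₙ` and `eₙ qₙ₊₁ - eₙ₊₁ qₙ = ±1`, and condition (a) gives `r |zₙ₊₁| > 1`. Hence
`|eₙ| ≤ rⁿ`, and as soon as `|qₙ| < |qₙ₊₁|` also `|eₙ qₙ| ≤ r/(1-r)`: this is the error bound,
and convergence follows.

The growth of `|qₙ|` is where the Eisenstein integers enter. By (b) and since `2` is not a norm,
`|aₙ|² ≥ 3` for `n ≥ 1`, and if `|aₙ₊₁|² ≥ 4` the growth is immediate. Otherwise `aₙ₊₁ = ρᵏ j`,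
and after a rotation by `ρᵏ` it suffices that `w = ρᵏ (aₙ + qₙ₋₁/qₙ)` avoids the disc
`|w - j/2| ≤ 1/2`, the locus of `|j + w⁻¹| ≤ 1`. Among the Eisenstein integers of norm at least
`3`, only `-1 + j`, `j` and `1 + j` lie within `3/2` of `j/2`, and (c) rules these out for `ρᵏ aₙ`.

If the partial quotients are periodic from `m` on, `zₘ` and `zₘ₊ₖ` have the same convergents,
hence are equal, so `zₘ` is a fixed point of a Möbius map with coefficients in `K` and is
quadratic, and so is `z`. Conversely (Lagrange), if `A z² + B z + C = 0` then `zₙ₊₁` is a root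
of the form `F(X, Y) = A X² + B X Y + C Y²` transported along the convergents; its coefficients
lie in `𝔈`, are bounded by `|F(pₙ, qₙ)| = |eₙ| |A eₙ - (2 A z + B) qₙ|` and the invariance of the
discriminant, so the iteration sequence takes finitely many values.
-/

open Filter Topology

section QPair

variable {R : Type*} [CommRing R]

/-- Index `n + 1` holds the paper's term of index `n`; index `0` holds the term of index `-1`. -/
def qPair (a : ℕ → R) (x y : R) : ℕ → R
  | 0 => x
  | 1 => y
  | n + 2 => a (n + 1) * qPair a x y (n + 1) + qPair a x y n

@[simp] lemma qPair_zero (a : ℕ → R) (x y : R) : qPair a x y 0 = x := rfl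

@[simp] lemma qPair_one (a : ℕ → R) (x y : R) : qPair a x y 1 = y := rfl

lemma qPair_add_two (a : ℕ → R) (x y : R) (n : ℕ) :
    qPair a x y (n + 2) = a (n + 1) * qPair a x y (n + 1) + qPair a x y n := rfl

lemma eq_qPair {a : ℕ → R} {x y : R} {g : ℕ → R} (h0 : g 0 = x) (h1 : g 1 = y)
    (h : ∀ n, g (n + 2) = a (n + 1) * g (n + 1) + g n) : g = qPair a x y := by
  funext n
  induction n using Nat.strongRecOn with
  | _ n ih =>
    match n with
    | 0 => exact h0
    | 1 => exact h1
    | n + 2 => rw [h, ih n (by omega), ih (n + 1) (by omega), qPair_add_two]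

lemma qPair_det (a : ℕ → R) (x y x' y' : R) (n : ℕ) :
    qPair a x y (n + 1) * qPair a x' y' n - qPair a x y n * qPair a x' y' (n + 1) =
      (-1) ^ n * (y * x' - x * y') := by
  induction n with
  | zero => simp
  | succ n ih =>
    rw [qPair_add_two, qPair_add_two, pow_succ]
    linear_combination -ih

lemma qPair_mem {S : Type*} [SetLike S R] [SubringClass S R] {s : S} {a : ℕ → R}
    (ha : ∀ n, a n ∈ s) {x y : R} (hx : x ∈ s) (hy : y ∈ s) : ∀ n, qPair a x y n ∈ s
  | 0 => hx
  | 1 => hy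
  | n + 2 => add_mem (mul_mem (ha _) (qPair_mem ha hx hy (n + 1))) (qPair_mem ha hx hy n)

end QPair

def EventuallyPeriodic {α : Type*} (a : ℕ → α) : Prop :=
  ∃ m k : ℕ, 1 ≤ k ∧ ∀ n, m ≤ n → a (n + k) = a n

lemma EventuallyPeriodic.comp {α β : Type*} {a : ℕ → α} (h : EventuallyPeriodic a)
    (g : α → β) : EventuallyPeriodic (g ∘ a) := by
  obtain ⟨m, k, hk, h⟩ := h
  exact ⟨m, k, hk, fun n hn => congrArg g (h n hn)⟩

lemma Function.eventuallyPeriodic_iterate_of_finite_range {α : Type*} {g : α → α} {x : α}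
    (h : (Set.range fun n => g^[n] x).Finite) : EventuallyPeriodic fun n => g^[n] x := by
  have : Finite (Set.range fun n => g^[n] x) := h
  obtain ⟨i, j, hij, he⟩ :=
    Finite.exists_ne_map_eq_of_infinite (Set.rangeFactorization fun n => g^[n] x)
  replace he : g^[i] x = g^[j] x := congrArg Subtype.val he
  wlog hlt : i < j generalizing i j
  · exact this j i hij.symm he.symm (by omega)
  refine ⟨i, j - i, by omega, fun n hn => ?_⟩
  obtain ⟨d, rfl⟩ := Nat.exists_eq_add_of_le hn
  show g^[i + d + (j - i)] x = g^[i + d] x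
  rw [show i + d + (j - i) = d + j by omega, Function.iterate_add_apply, ← he,
    ← Function.iterate_add_apply, add_comm]

def IsQuadSurd (K : Subfield ℂ) (z : ℂ) : Prop :=
  z ∉ K ∧ ∃ A B C : ℂ, A ∈ K ∧ B ∈ K ∧ C ∈ K ∧ A ≠ 0 ∧ A * z ^ 2 + B * z + C = 0

lemma IsQuadSurd.of_inv_sub {K : Subfield ℂ} {w a : ℂ} (ha : a ∈ K) (hw : w ∉ K)
    (h : IsQuadSurd K (w - a)⁻¹) : IsQuadSurd K w := by
  obtain ⟨-, A, B, C, hA, hB, hC, hA0, hroot⟩ := h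
  have hd : w - a ≠ 0 := fun h => hw (sub_eq_zero.1 h ▸ ha)
  have hroot' : C * (w - a) ^ 2 + B * (w - a) + A = 0 := by
    field_simp at hroot
    linear_combination hroot
  have hC0 : C ≠ 0 := by
    rintro rfl
    have hB0 : B ≠ 0 := by rintro rfl; exact hA0 (by linear_combination hroot')
    refine hw ?_
    rw [show w = a - A / B by field_simp; linear_combination hroot']
    exact sub_mem ha (div_mem hA hB)
  refine ⟨hw, C, B - 2 * C * a, A - B * a + C * a ^ 2, hC, ?_, ?_, hC0, ?_⟩
  · exact sub_mem hB (mul_mem (mul_mem (ofNat_mem K 2) hC) ha)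
  · exact add_mem (sub_mem hA (mul_mem hB ha)) (mul_mem hC (pow_mem ha 2))
  · linear_combination hroot'

lemma Subring.exists_eq_div_of_mem_closure {F : Type*} [Field F] {Γ : Subring F} {x : F}
    (hx : x ∈ Subfield.closure (Γ : Set F)) : ∃ a ∈ Γ, ∃ b ∈ Γ, b ≠ 0 ∧ x = a / b := by
  rw [Subfield.mem_closure_iff, Subring.closure_eq] at hx
  obtain ⟨a, ha, b, hb, rfl⟩ := hx
  by_cases hb0 : b = 0
  · exact ⟨0, zero_mem Γ, 1, one_mem Γ, one_ne_zero, by simp [hb0]⟩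
  · exact ⟨a, ha, b, hb, hb0, rfl⟩

lemma IsQuadSurd.exists_coeffs_mem {Γ : Subring ℂ} {z : ℂ}
    (h : IsQuadSurd (Subfield.closure (Γ : Set ℂ)) z) :
    ∃ A B C : ℂ, A ∈ Γ ∧ B ∈ Γ ∧ C ∈ Γ ∧ A ≠ 0 ∧ A * z ^ 2 + B * z + C = 0 := by
  obtain ⟨-, A, B, C, hA, hB, hC, hA0, hroot⟩ := h
  obtain ⟨a, ha, a', ha', ha'0, rfl⟩ := Subring.exists_eq_div_of_mem_closure hA
  obtain ⟨b, hb, b', hb', hb'0, rfl⟩ := Subring.exists_eq_div_of_mem_closure hB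
  obtain ⟨c, hc, c', hc', hc'0, rfl⟩ := Subring.exists_eq_div_of_mem_closure hC
  refine ⟨a * b' * c', b * a' * c', c * a' * b', mul_mem (mul_mem ha hb') hc',
    mul_mem (mul_mem hb ha') hc', mul_mem (mul_mem hc ha') hb', ?_, ?_⟩
  · have : a ≠ 0 := by rintro rfl; simp at hA0
    positivity
  · field_simp at hroot
    linear_combination hroot

def quadForm (A B C x y : ℂ) : ℂ := A * x ^ 2 + B * x * y + C * y ^ 2

def polarForm (A B C x y x' y' : ℂ) : ℂ :=
  2 * A * x * x' + B * (x * y' + x' * y) + 2 * C * y * y'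

section Mem

variable {S : Type*} [SetLike S ℂ] [SubringClass S ℂ] {s : S} {A B C x y x' y' : ℂ}

lemma quadForm_mem (hA : A ∈ s) (hB : B ∈ s) (hC : C ∈ s) (hx : x ∈ s) (hy : y ∈ s) :
    quadForm A B C x y ∈ s :=
  add_mem (add_mem (mul_mem hA (pow_mem hx 2)) (mul_mem (mul_mem hB hx) hy))
    (mul_mem hC (pow_mem hy 2))

lemma polarForm_mem (hA : A ∈ s) (hB : B ∈ s) (hC : C ∈ s) (hx : x ∈ s) (hy : y ∈ s)
    (hx' : x' ∈ s) (hy' : y' ∈ s) : polarForm A B C x y x' y' ∈ s := by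
  have h2 : (2 : ℂ) ∈ s := ofNat_mem s 2
  exact add_mem (add_mem (mul_mem (mul_mem (mul_mem h2 hA) hx) hx')
    (mul_mem hB (add_mem (mul_mem hx hy') (mul_mem hx' hy))))
    (mul_mem (mul_mem (mul_mem h2 hC) hy) hy')

end Mem

lemma quadForm_add_mul (A B C x y x' y' w : ℂ) :
    quadForm A B C (x * w + x') (y * w + y') =
      quadForm A B C x y * w ^ 2 + polarForm A B C x y x' y' * w + quadForm A B C x' y' := by
  simp only [quadForm, polarForm]
  ring

lemma polarForm_sq_sub (A B C x y x' y' : ℂ) :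
    polarForm A B C x y x' y' ^ 2 - 4 * quadForm A B C x y * quadForm A B C x' y' =
      (B ^ 2 - 4 * A * C) * (x * y' - x' * y) ^ 2 := by
  simp only [quadForm, polarForm]
  ring

lemma quadForm_ne_zero {K : Subfield ℂ} {A B C z x y : ℂ} (hA : A ∈ K) (hB : B ∈ K)
    (hA0 : A ≠ 0) (hz : z ∉ K) (hroot : A * z ^ 2 + B * z + C = 0) (hx : x ∈ K) (hy : y ∈ K)
    (hy0 : y ≠ 0) : quadForm A B C x y ≠ 0 := by
  intro h
  have ht : x / y ∈ K := div_mem hx hy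
  have hfac : (z - x / y) * (A * (z + x / y) + B) = 0 := by
    simp only [quadForm] at h
    field_simp
    linear_combination y ^ 2 * hroot - h
  rcases mul_eq_zero.1 hfac with h1 | h1
  · exact hz (sub_eq_zero.1 h1 ▸ ht)
  · refine hz ?_
    rw [show z = -B / A - x / y by
      rw [eq_sub_iff_add_eq, eq_div_iff hA0]; linear_combination h1]
    exact sub_mem (div_mem (neg_mem hB) hA) ht

lemma norm_quadForm_le {A B C z x y : ℂ} {c : ℝ} (hroot : A * z ^ 2 + B * z + C = 0)
    (h1 : ‖y * z - x‖ ≤ 1) (hc : ‖y * z - x‖ * ‖y‖ ≤ c) :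
    ‖quadForm A B C x y‖ ≤ ‖A‖ + c * (2 * ‖A‖ * ‖z‖ + ‖B‖) := by
  set e := y * z - x
  have he : quadForm A B C x y = A * e ^ 2 - e * y * (2 * A * z + B) := by
    simp only [quadForm, e]
    linear_combination y ^ 2 * hroot
  have hB : ‖2 * A * z + B‖ ≤ 2 * ‖A‖ * ‖z‖ + ‖B‖ := by
    refine (norm_add_le _ _).trans ?_
    simp
  rw [he]
  refine (norm_sub_le _ _).trans ?_
  rw [norm_mul, norm_mul, norm_mul, norm_pow]
  gcongr
  · exact mul_le_of_le_one_right (norm_nonneg A) (pow_le_one₀ (norm_nonneg e) h1)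
  · exact (mul_nonneg (norm_nonneg _) (norm_nonneg _)).trans hc

lemma norm_le_sqrt_of_sq_eq_add {G D a b : ℂ} {M : ℝ} (h : G ^ 2 = D + 4 * a * b)
    (ha : ‖a‖ ≤ M) (hb : ‖b‖ ≤ M) : ‖G‖ ≤ Real.sqrt (‖D‖ + 4 * M ^ 2) := by
  have hM : 0 ≤ M := (norm_nonneg _).trans ha
  rw [Real.le_sqrt (norm_nonneg _) (by positivity), ← norm_pow, h]
  refine (norm_add_le _ _).trans (add_le_add le_rfl ?_)
  rw [norm_mul, norm_mul, Complex.norm_ofNat, sq, ← mul_assoc]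
  gcongr

lemma finite_setOf_quadratic_root {T : Set ℂ} (hT : T.Finite) :
    {w : ℂ | ∃ A ∈ T, ∃ B ∈ T, ∃ C ∈ T, A ≠ 0 ∧ A * w ^ 2 + B * w + C = 0}.Finite := by
  open Polynomial in
  refine (((hT.prod (hT.prod hT)).sep fun t => t.1 ≠ 0).biUnion fun t ht =>
    finite_setOfPred_isRoot (p := C t.1 * X ^ 2 + C t.2.1 * X + C t.2.2)
      fun hp => ht.2 ?_).subset ?_
  · simpa using congrArg (coeff · 2) hp
  · rintro w ⟨A, hA, B, hB, C, hC, hA0, hw⟩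
    exact Set.mem_biUnion (x := (A, B, C)) ⟨⟨hA, hB, hC⟩, hA0⟩ (by simpa using hw)

namespace CFAlgorithm

variable (f : ℂ → ℂ)

noncomputable def step (w : ℂ) : ℂ := (w - f w)⁻¹

def fundamentalSet (K : Subfield ℂ) : Set ℂ := (fun w => w - f w) '' {w : ℂ | w ∉ K}

noncomputable def partialQuot (z : ℂ) (n : ℕ) : ℂ := f ((step f)^[n] z)

noncomputable def num (z : ℂ) : ℕ → ℂ := qPair (partialQuot f z) 1 (partialQuot f z 0)

noncomputable def den (z : ℂ) : ℕ → ℂ := qPair (partialQuot f z) 0 1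

noncomputable def err (z : ℂ) (n : ℕ) : ℂ := den f z n * z - num f z n

variable {f} {K : Subfield ℂ} {z : ℂ}

lemma partialQuot_step_iterate (z : ℂ) (m : ℕ) :
    partialQuot f ((step f)^[m] z) = fun n => partialQuot f z (n + m) := by
  funext n
  simp only [partialQuot, Function.iterate_add_apply]

lemma err_zero : err f z 0 = -1 := by simp [err, num, den]

lemma err_add_two (n : ℕ) :
    err f z (n + 2) = f ((step f)^[n + 1] z) * err f z (n + 1) + err f z n := by
  simp only [err, num, den, qPair_add_two, partialQuot]
  ring

lemma num_mul_den_sub (n : ℕ) :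
    num f z (n + 1) * den f z n - num f z n * den f z (n + 1) = (-1) ^ (n + 1) := by
  have := qPair_det (partialQuot f z) 1 (partialQuot f z 0) 0 1 n
  simp only [num, den] at this ⊢
  rw [pow_succ]
  linear_combination this

lemma err_mul_den_sub (n : ℕ) :
    err f z n * den f z (n + 1) - err f z (n + 1) * den f z n = (-1) ^ (n + 1) := by
  simp only [err]
  linear_combination num_mul_den_sub n

section Mem

variable {S : Type*} [SetLike S ℂ] [SubringClass S ℂ] {s : S}

lemma num_mem (hf : ∀ w, f w ∈ s) (z : ℂ) (n : ℕ) : num f z n ∈ s :=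
  qPair_mem (fun _ => hf _) (one_mem s) (hf _) n

lemma den_mem (hf : ∀ w, f w ∈ s) (z : ℂ) (n : ℕ) : den f z n ∈ s :=
  qPair_mem (fun _ => hf _) (zero_mem s) (one_mem s) n

end Mem

lemma sub_ne_zero_of_not_mem (hfK : ∀ w, f w ∈ K) {w : ℂ} (hw : w ∉ K) : w - f w ≠ 0 :=
  fun h => hw (sub_eq_zero.1 h ▸ hfK w)

lemma step_iterate_not_mem (hfK : ∀ w, f w ∈ K) (hz : z ∉ K) (n : ℕ) :
    (step f)^[n] z ∉ K := by
  induction n with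
  | zero => exact hz
  | succ n ih =>
    rw [Function.iterate_succ_apply']
    intro h
    have := add_mem (inv_mem h) (hfK ((step f)^[n] z))
    rw [step, inv_inv, sub_add_cancel] at this
    exact ih this

lemma step_iterate_succ_mem_inv_fundamentalSet (hfK : ∀ w, f w ∈ K) (hz : z ∉ K) (n : ℕ) :
    (step f)^[n + 1] z ∈ Inv.inv '' fundamentalSet f K :=
  ⟨_, ⟨_, step_iterate_not_mem hfK hz n, rfl⟩, by rw [Function.iterate_succ_apply']; rfl⟩

lemma err_succ_mul_step_iterate (hfK : ∀ w, f w ∈ K) (hz : z ∉ K) (n : ℕ) :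
    err f z (n + 1) * (step f)^[n + 1] z = -err f z n := by
  induction n with
  | zero =>
    have := sub_ne_zero_of_not_mem hfK hz
    simp only [err, num, den, partialQuot, zero_add, qPair_zero, qPair_one, Function.iterate_zero,
      Function.iterate_one, id_eq, step, one_mul, zero_mul, zero_sub, neg_neg]
    field_simp
  | succ n ih =>
    set w := (step f)^[n + 1] z
    have hw : w - f w ≠ 0 := sub_ne_zero_of_not_mem hfK (step_iterate_not_mem hfK hz _)
    have h : err f z (n + 2) = -err f z (n + 1) * (w - f w) := by
      rw [err_add_two]
      linear_combination ih
    rw [Function.iterate_succ_apply', h, step, mul_assoc, mul_inv_cancel₀ hw, mul_one]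

lemma norm_err_mul_norm_den_add_eq_one (hfK : ∀ w, f w ∈ K) (hz : z ∉ K) (n : ℕ) :
    ‖err f z (n + 1)‖ * ‖den f z (n + 1) * (step f)^[n + 1] z + den f z n‖ = 1 := by
  rw [← norm_mul, show err f z (n + 1) * (den f z (n + 1) * (step f)^[n + 1] z + den f z n)
      = -(-1) ^ (n + 1) by
    linear_combination -err_mul_den_sub n + den f z (n + 1) * err_succ_mul_step_iterate hfK hz n]
  simp

lemma quadForm_num_den_step_iterate (hfK : ∀ w, f w ∈ K) (hz : z ∉ K) {A B C : ℂ}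
    (hroot : A * z ^ 2 + B * z + C = 0) (n : ℕ) :
    quadForm A B C (num f z (n + 1)) (den f z (n + 1)) * (step f)^[n + 1] z ^ 2 +
      polarForm A B C (num f z (n + 1)) (den f z (n + 1)) (num f z n) (den f z n) *
        (step f)^[n + 1] z + quadForm A B C (num f z n) (den f z n) = 0 := by
  have he := err_succ_mul_step_iterate hfK hz n
  simp only [err] at he
  rw [← quadForm_add_mul, show num f z (n + 1) * (step f)^[n + 1] z + num f z n =
    z * (den f z (n + 1) * (step f)^[n + 1] z + den f z n) by linear_combination -he]
  simp only [quadForm]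
  linear_combination (den f z (n + 1) * (step f)^[n + 1] z + den f z n) ^ 2 * hroot

lemma isQuadSurd_of_step_iterate (hfK : ∀ w, f w ∈ K) (hz : z ∉ K) (m : ℕ)
    (h : IsQuadSurd K ((step f)^[m] z)) : IsQuadSurd K z := by
  induction m generalizing z with
  | zero => exact h
  | succ m ih =>
    rw [Function.iterate_succ_apply] at h
    exact (ih (step_iterate_not_mem hfK hz 1) h).of_inv_sub (hfK z) hz

/-- Of these conditions, only the growth of the denominators depends on the arithmetic of the
ring of values. -/
structure IsConvergent (f : ℂ → ℂ) (K : Subfield ℂ) (r : ℝ) : Prop where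
  mem : ∀ w, f w ∈ K
  fundamentalSet_subset : fundamentalSet f K ⊆ Metric.ball 0 r
  lt_one : r < 1
  norm_den_lt : ∀ w ∉ K, ∀ n, ‖den f w n‖ < ‖den f w (n + 1)‖

namespace IsConvergent

variable {r : ℝ}

lemma norm_sub_lt (h : IsConvergent f K r) {w : ℂ} (hw : w ∉ K) : ‖w - f w‖ < r := by
  simpa using h.fundamentalSet_subset ⟨w, hw, rfl⟩

lemma pos (h : IsConvergent f K r) (hz : z ∉ K) : 0 < r :=
  (norm_nonneg _).trans_lt (h.norm_sub_lt hz)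

lemma one_lt_mul_norm_step_iterate (h : IsConvergent f K r) (hz : z ∉ K) (n : ℕ) :
    1 < r * ‖(step f)^[n + 1] z‖ := by
  have hw := step_iterate_not_mem h.mem hz n
  rw [Function.iterate_succ_apply', step, norm_inv, ← div_eq_mul_inv,
    one_lt_div (norm_pos_iff.2 (sub_ne_zero_of_not_mem h.mem hw))]
  exact h.norm_sub_lt hw

lemma norm_err_le (h : IsConvergent f K r) (hz : z ∉ K) (n : ℕ) : ‖err f z n‖ ≤ r ^ n := by
  induction n with
  | zero => simp [err_zero]
  | succ n ih =>
    have he := congrArg norm (err_succ_mul_step_iterate h.mem hz n)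
    rw [norm_mul, norm_neg] at he
    have := h.one_lt_mul_norm_step_iterate hz n
    rw [pow_succ]
    nlinarith [norm_nonneg (err f z (n + 1)), h.pos hz]

lemma one_le_norm_den (h : IsConvergent f K r) (hz : z ∉ K) (n : ℕ) :
    1 ≤ ‖den f z (n + 1)‖ := by
  induction n with
  | zero => simp [den]
  | succ n ih => exact ih.trans (h.norm_den_lt z hz _).le

lemma den_ne_zero (h : IsConvergent f K r) (hz : z ∉ K) (n : ℕ) : den f z (n + 1) ≠ 0 :=
  norm_pos_iff.1 (one_pos.trans_le (h.one_le_norm_den hz n))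

lemma norm_err_mul_norm_den_le (h : IsConvergent f K r) (hz : z ∉ K) (n : ℕ) :
    ‖err f z n‖ * ‖den f z n‖ ≤ r / (1 - r) := by
  have hr := h.pos hz
  have hr1 := h.lt_one
  cases n with
  | zero => simpa [den] using div_nonneg hr.le (by linarith)
  | succ n =>
    set e := ‖err f z (n + 1)‖
    set q := ‖den f z (n + 1)‖
    set w := (step f)^[n + 1] z
    have h1 := norm_err_mul_norm_den_add_eq_one h.mem hz n
    have hw := h.one_lt_mul_norm_step_iterate hz n
    have hq : ‖den f z n‖ ≤ q := (h.norm_den_lt z hz n).le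
    have hlow : q * (‖w‖ - 1) ≤ ‖den f z (n + 1) * w + den f z n‖ := by
      have := norm_sub_norm_le (den f z (n + 1) * w) (-den f z n)
      rw [sub_neg_eq_add, norm_neg, norm_mul] at this
      nlinarith
    rw [le_div_iff₀ (by linarith)]
    have he : 0 ≤ e := norm_nonneg _
    have hq0 : 0 ≤ q := norm_nonneg _
    nlinarith [mul_le_mul_of_nonneg_left hlow he, mul_nonneg he hq0]

lemma sub_convergent_eq (h : IsConvergent f K r) (hz : z ∉ K) (n : ℕ) :
    z - num f z (n + 1) / den f z (n + 1) = err f z (n + 1) / den f z (n + 1) := by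
  field_simp [h.den_ne_zero hz n]
  simp only [err]
  ring

lemma norm_sub_convergent_le (h : IsConvergent f K r) (hz : z ∉ K) (n : ℕ) :
    ‖z - num f z (n + 1) / den f z (n + 1)‖ ≤ r / (1 - r) * (‖den f z (n + 1)‖ ^ 2)⁻¹ := by
  have hq := norm_pos_iff.2 (h.den_ne_zero hz n)
  rw [h.sub_convergent_eq hz, norm_div, ← div_eq_mul_inv, le_div_iff₀ (by positivity)]
  calc ‖err f z (n + 1)‖ / ‖den f z (n + 1)‖ * ‖den f z (n + 1)‖ ^ 2
      = ‖err f z (n + 1)‖ * ‖den f z (n + 1)‖ := by field_simp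
    _ ≤ r / (1 - r) := h.norm_err_mul_norm_den_le hz (n + 1)

lemma tendsto_convergent (h : IsConvergent f K r) (hz : z ∉ K) :
    Tendsto (fun n => num f z (n + 1) / den f z (n + 1)) atTop (𝓝 z) := by
  rw [tendsto_iff_norm_sub_tendsto_zero]
  refine squeeze_zero (fun _ => norm_nonneg _) (fun n => ?_)
    ((tendsto_pow_atTop_nhds_zero_of_lt_one (h.pos hz).le h.lt_one).comp
      (tendsto_add_atTop_nat 1))
  rw [norm_sub_rev, h.sub_convergent_eq hz, norm_div]
  exact (div_le_self (norm_nonneg _) (h.one_le_norm_den hz n)).trans (h.norm_err_le hz _)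

lemma eq_of_partialQuot_eq (h : IsConvergent f K r) {w w' : ℂ} (hw : w ∉ K) (hw' : w' ∉ K)
    (he : partialQuot f w = partialQuot f w') : w = w' := by
  refine tendsto_nhds_unique (h.tendsto_convergent hw) ?_
  simpa only [num, den, he] using h.tendsto_convergent hw'

lemma isQuadSurd_of_step_iterate_eq (h : IsConvergent f K r) {w : ℂ} (hw : w ∉ K) (k : ℕ)
    (hk : (step f)^[k + 1] w = w) : IsQuadSurd K w := by
  have he := err_succ_mul_step_iterate h.mem hw k
  rw [hk] at he
  refine ⟨hw, den f w (k + 1), den f w k - num f w (k + 1), -num f w k,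
    den_mem h.mem w _, sub_mem (den_mem h.mem w _) (num_mem h.mem w _),
    neg_mem (num_mem h.mem w _), h.den_ne_zero hw k, ?_⟩
  simp only [err] at he
  linear_combination he

lemma isQuadSurd_of_eventuallyPeriodic (h : IsConvergent f K r) (hz : z ∉ K)
    (hp : EventuallyPeriodic (partialQuot f z)) : IsQuadSurd K z := by
  obtain ⟨m, k, hk, hp⟩ := hp
  obtain ⟨k, rfl⟩ := Nat.exists_eq_add_of_le' hk
  refine isQuadSurd_of_step_iterate h.mem hz m
    (h.isQuadSurd_of_step_iterate_eq (step_iterate_not_mem h.mem hz m) k ?_)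
  rw [← Function.iterate_add_apply]
  refine h.eq_of_partialQuot_eq (step_iterate_not_mem h.mem hz _)
    (step_iterate_not_mem h.mem hz _) ?_
  simp only [partialQuot_step_iterate]
  funext n
  rw [← hp (n + m) (by omega)]
  ring_nf

lemma finite_range_step_iterate {Γ : Subring ℂ} (h : IsConvergent f (Subfield.closure Γ) r)
    (hfΓ : ∀ w, f w ∈ Γ) (hΓ : ∀ M : ℝ, {v | v ∈ Γ ∧ ‖v‖ ≤ M}.Finite)
    (hz : IsQuadSurd (Subfield.closure Γ) z) :
    (Set.range fun n => (step f)^[n] z).Finite := by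
  obtain ⟨A, B, C, hA, hB, hC, hA0, hroot⟩ := hz.exists_coeffs_mem
  have hΓK : ∀ {v}, v ∈ Γ → v ∈ Subfield.closure (Γ : Set ℂ) :=
    fun hv => Subfield.subset_closure hv
  set F := fun n => quadForm A B C (num f z n) (den f z n)
  set G := fun n => polarForm A B C (num f z (n + 1)) (den f z (n + 1)) (num f z n) (den f z n)
  have hF0 : ∀ n, F (n + 1) ≠ 0 := fun n =>
    quadForm_ne_zero (hΓK hA) (hΓK hB) hA0 hz.1 hroot (num_mem h.mem z _) (den_mem h.mem z _)
      (h.den_ne_zero hz.1 n)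
  set M₁ := ‖A‖ + r / (1 - r) * (2 * ‖A‖ * ‖z‖ + ‖B‖)
  have hF : ∀ n, ‖F n‖ ≤ M₁ := fun n =>
    norm_quadForm_le hroot
      ((h.norm_err_le hz.1 n).trans (pow_le_one₀ (h.pos hz.1).le h.lt_one.le))
      (h.norm_err_mul_norm_den_le hz.1 n)
  set M₂ := Real.sqrt (‖B ^ 2 - 4 * A * C‖ + 4 * M₁ ^ 2)
  have hG : ∀ n, ‖G n‖ ≤ M₂ := by
    refine fun n => norm_le_sqrt_of_sq_eq_add ?_ (hF (n + 1)) (hF n)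
    have := polarForm_sq_sub A B C (num f z (n + 1)) (den f z (n + 1)) (num f z n) (den f z n)
    rw [num_mul_den_sub, ← pow_mul, pow_mul', neg_one_sq, one_pow, mul_one] at this
    linear_combination this
  refine ((finite_setOf_quadratic_root (hΓ (max M₁ M₂))).insert z).subset ?_
  rintro _ ⟨_ | n, rfl⟩
  · exact Set.mem_insert _ _
  refine Set.mem_insert_of_mem _ ⟨F (n + 1), ⟨?_, (hF _).trans (le_max_left _ _)⟩, G n,
    ⟨?_, (hG n).trans (le_max_right _ _)⟩, F n, ⟨?_, (hF _).trans (le_max_left _ _)⟩, hF0 n,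
    quadForm_num_den_step_iterate h.mem hz.1 hroot n⟩
  · exact quadForm_mem hA hB hC (num_mem hfΓ z _) (den_mem hfΓ z _)
  · exact polarForm_mem hA hB hC (num_mem hfΓ z _) (den_mem hfΓ z _) (num_mem hfΓ z _)
      (den_mem hfΓ z _)
  · exact quadForm_mem hA hB hC (num_mem hfΓ z _) (den_mem hfΓ z _)

theorem isQuadSurd_iff_eventuallyPeriodic {Γ : Subring ℂ}
    (h : IsConvergent f (Subfield.closure Γ) r) (hfΓ : ∀ w, f w ∈ Γ)
    (hΓ : ∀ M : ℝ, {v | v ∈ Γ ∧ ‖v‖ ≤ M}.Finite) (hz : z ∉ Subfield.closure (Γ : Set ℂ)) :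
    IsQuadSurd (Subfield.closure Γ) z ↔ EventuallyPeriodic (partialQuot f z) :=
  ⟨fun hq => (Function.eventuallyPeriodic_iterate_of_finite_range
    (h.finite_range_step_iterate hfΓ hΓ hq)).comp f, h.isQuadSurd_of_eventuallyPeriodic hz⟩

end IsConvergent

end CFAlgorithm

namespace Eisenstein

open Complex CFAlgorithm

noncomputable def ω : ℂ := -(1 / 2) + (Real.sqrt 3 / 2) * Complex.I

noncomputable def ρ : ℂ := 1 / 2 + (Real.sqrt 3 / 2) * Complex.I

noncomputable def j : ℂ := Real.sqrt 3 * Complex.I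

lemma sqrt_three_sq : Real.sqrt 3 ^ 2 = 3 := Real.sq_sqrt (by norm_num)

lemma ω_sq : ω ^ 2 = -1 - ω := by
  have h3 : ((Real.sqrt 3 : ℝ) : ℂ) ^ 2 = 3 := by exact_mod_cast sqrt_three_sq
  simp only [ω]
  linear_combination (Complex.I ^ 2 / 4) * h3 + (3 / 4 : ℂ) * Complex.I_sq

lemma ρ_eq : ρ = 1 + ω := by simp only [ρ, ω]; ring

lemma j_eq : j = 1 + 2 * ω := by simp only [j, ω]; ring

lemma normSq_add_mul_ω (s t : ℝ) : normSq (s + t * ω) = s ^ 2 - s * t + t ^ 2 := by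
  rw [show (s + t * ω : ℂ) = ((s - t / 2 : ℝ) : ℂ) + ((t * Real.sqrt 3 / 2 : ℝ) : ℂ) * I by
    simp only [ω]; push_cast; ring, normSq_add_mul_I]
  linear_combination (t ^ 2 / 4) * sqrt_three_sq

lemma norm_ρ : ‖ρ‖ = 1 := by
  rw [← pow_eq_one_iff_of_nonneg (norm_nonneg _) two_ne_zero, Complex.sq_norm, ρ_eq,
    show (1 + ω : ℂ) = ((1 : ℝ) : ℂ) + ((1 : ℝ) : ℂ) * ω by push_cast; ring, normSq_add_mul_ω]
  norm_num

noncomputable def integers : Subring ℂ where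
  carrier := {w | ∃ x y : ℤ, w = x + y * ω}
  zero_mem' := ⟨0, 0, by simp⟩
  one_mem' := ⟨1, 0, by simp⟩
  add_mem' := by
    rintro _ _ ⟨x, y, rfl⟩ ⟨x', y', rfl⟩
    exact ⟨x + x', y + y', by push_cast; ring⟩
  neg_mem' := by
    rintro _ ⟨x, y, rfl⟩
    exact ⟨-x, -y, by push_cast; ring⟩
  mul_mem' := by
    rintro _ _ ⟨x, y, rfl⟩ ⟨x', y', rfl⟩
    exact ⟨x * x' - y * y', x * y' + x' * y - y * y', by
      push_cast; linear_combination y * y' * ω_sq⟩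

notation "𝔈" => Eisenstein.integers

lemma ρ_mem : ρ ∈ 𝔈 := ⟨1, 1, by rw [ρ_eq]; push_cast; ring⟩

lemma normSq_intCast_add_mul_ω (x y : ℤ) :
    normSq (x + y * ω) = ((x ^ 2 - x * y + y ^ 2 : ℤ) : ℝ) := by
  push_cast
  exact_mod_cast normSq_add_mul_ω x y

lemma finite_setOf_norm_le (M : ℝ) : {v | v ∈ 𝔈 ∧ ‖v‖ ≤ M}.Finite := by
  obtain ⟨N, hN⟩ := exists_nat_ge M
  have hbox := Set.finite_Icc (-2 * (N : ℤ)) (2 * N)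
  refine ((hbox.prod hbox).image fun p : ℤ × ℤ => (p.1 : ℂ) + p.2 * ω).subset ?_
  rintro _ ⟨⟨x, y, rfl⟩, hM⟩
  have h : ((x ^ 2 - x * y + y ^ 2 : ℤ) : ℝ) ≤ (N : ℝ) ^ 2 := by
    rw [← normSq_intCast_add_mul_ω, ← Complex.sq_norm]
    exact pow_le_pow_left₀ (norm_nonneg _) (hM.trans hN) 2
  have h : x ^ 2 - x * y + y ^ 2 ≤ (N : ℤ) ^ 2 := by exact_mod_cast h
  refine ⟨(x, y), ⟨⟨?_, ?_⟩, ⟨?_, ?_⟩⟩, rfl⟩ <;>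
    nlinarith [sq_nonneg (2 * x - y), sq_nonneg (2 * y - x), Int.natCast_nonneg N]

lemma normForm_ne_two (x y : ℤ) : x ^ 2 - x * y + y ^ 2 ≠ 2 := by
  intro h
  have key : ∀ a b : ZMod 3, a ^ 2 - a * b + b ^ 2 ≠ 2 := by decide
  exact key x y (by exact_mod_cast congrArg (Int.cast : ℤ → ZMod 3) h)

lemma normForm_eq_three {x y : ℤ} (h : x ^ 2 - x * y + y ^ 2 = 3) :
    (x = 1 ∧ y = 2) ∨ (x = -1 ∧ y = 1) ∨ (x = -2 ∧ y = -1) ∨ (x = -1 ∧ y = -2) ∨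
      (x = 1 ∧ y = -1) ∨ (x = 2 ∧ y = 1) := by
  have hy : y ^ 2 ≤ 4 := by nlinarith [sq_nonneg (2 * x - y)]
  have hx : x ^ 2 ≤ 4 := by nlinarith [sq_nonneg (x - 2 * y)]
  obtain ⟨hy₁, hy₂⟩ : -2 ≤ y ∧ y ≤ 2 := ⟨by nlinarith, by nlinarith⟩
  obtain ⟨hx₁, hx₂⟩ : -2 ≤ x ∧ x ≤ 2 := ⟨by nlinarith, by nlinarith⟩
  interval_cases x <;> interval_cases y <;> omega

lemma nine_le_of_three_le_normForm {x y : ℤ} (h : 3 ≤ x ^ 2 - x * y + y ^ 2)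
    (hy : y = 2 → x ≠ 0 ∧ x ≠ 1 ∧ x ≠ 2) : 9 ≤ (2 * x - y) ^ 2 + 3 * (y - 1) ^ 2 := by
  rcases le_or_gt y (-1) with hy' | hy'
  · nlinarith
  rcases le_or_gt 3 y with hy'' | hy''
  · nlinarith
  interval_cases y
  · nlinarith
  · nlinarith
  · have : x ≤ -1 ∨ 3 ≤ x := by omega
    rcases this with hx | hx <;> nlinarith

lemma normSq_eq_three_or_four_le {b : ℂ} (hb : b ∈ 𝔈) (h : 1 < ‖b‖) :
    normSq b = 3 ∨ 4 ≤ normSq b := by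
  obtain ⟨x, y, rfl⟩ := hb
  have h1 : 1 < normSq (x + y * ω) := by rw [← Complex.sq_norm]; nlinarith
  rw [normSq_intCast_add_mul_ω] at h1 ⊢
  have h1 : 1 < x ^ 2 - x * y + y ^ 2 := by exact_mod_cast h1
  rcases (show x ^ 2 - x * y + y ^ 2 = 3 ∨ 4 ≤ x ^ 2 - x * y + y ^ 2 by
    have := normForm_ne_two x y; omega) with h | h
  · exact Or.inl (by exact_mod_cast h)
  · exact Or.inr (by exact_mod_cast h)

lemma exists_eq_ρ_pow_mul_j {b : ℂ} (hb : b ∈ 𝔈) (h : normSq b = 3) :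
    ∃ k ≤ 5, b = ρ ^ k * j := by
  obtain ⟨x, y, rfl⟩ := hb
  rw [normSq_intCast_add_mul_ω] at h
  -- each coefficient is the quotient of `(1 + ω) ^ k (1 + 2 ω) - (x + y ω)` by `ω ^ 2 + ω + 1`
  rcases normForm_eq_three (by exact_mod_cast h) with
      ⟨rfl, rfl⟩ | ⟨rfl, rfl⟩ | ⟨rfl, rfl⟩ | ⟨rfl, rfl⟩ | ⟨rfl, rfl⟩ | ⟨rfl, rfl⟩
  · exact ⟨0, by norm_num, by rw [j_eq]; push_cast; ring⟩
  · exact ⟨1, by norm_num, by rw [ρ_eq, j_eq]; push_cast; linear_combination -2 * ω_sq⟩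
  · exact ⟨2, by norm_num, by
      rw [ρ_eq, j_eq]; push_cast; linear_combination -(3 + 2 * ω) * ω_sq⟩
  · exact ⟨3, by norm_num, by
      rw [ρ_eq, j_eq]; push_cast; linear_combination -(2 + 5 * ω + 2 * ω ^ 2) * ω_sq⟩
  · exact ⟨4, by norm_num, by
      rw [ρ_eq, j_eq]; push_cast; linear_combination -(7 * ω + 7 * ω ^ 2 + 2 * ω ^ 3) * ω_sq⟩
  · exact ⟨5, by norm_num, by
      rw [ρ_eq, j_eq]; push_cast
      linear_combination -(-1 + 7 * ω + 14 * ω ^ 2 + 9 * ω ^ 3 + 2 * ω ^ 4) * ω_sq⟩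

def exceptional : Set ℂ := {-1 + j, j, 1 + j}

lemma three_halves_le_norm_sub_half_j {b : ℂ} (hb : b ∈ 𝔈) (h3 : 3 ≤ normSq b)
    (hbt : b ∉ exceptional) : 3 / 2 ≤ ‖b - j / 2‖ := by
  obtain ⟨x, y, rfl⟩ := hb
  rw [normSq_intCast_add_mul_ω] at h3
  have hy : y = 2 → x ≠ 0 ∧ x ≠ 1 ∧ x ≠ 2 := by
    rintro rfl
    refine ⟨?_, ?_, ?_⟩ <;> rintro rfl <;> apply hbt
    · exact Or.inl (by rw [j_eq]; push_cast; ring)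
    · exact Or.inr (Or.inl (by rw [j_eq]; push_cast; ring))
    · exact Or.inr (Or.inr (Set.mem_singleton_iff.2 (by rw [j_eq]; push_cast; ring)))
  have h9 := nine_le_of_three_le_normForm (by exact_mod_cast h3) hy
  have hnormSq : normSq (x + y * ω - j / 2) = ((2 * x - y) ^ 2 + 3 * (y - 1) ^ 2 : ℤ) / 4 := by
    rw [show (x + y * ω - j / 2 : ℂ) = ((x - 1 / 2 : ℝ) : ℂ) + ((y - 1 : ℝ) : ℂ) * ω by
      rw [j_eq]; push_cast; ring, normSq_add_mul_ω]
    push_cast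
    ring
  have : (9 / 4 : ℝ) ≤ ‖x + y * ω - j / 2‖ ^ 2 := by
    rw [Complex.sq_norm, hnormSq]
    have : (9 : ℝ) ≤ ((2 * x - y) ^ 2 + 3 * (y - 1) ^ 2 : ℤ) := by exact_mod_cast h9
    linarith
  nlinarith [norm_nonneg (x + y * ω - j / 2 : ℂ)]

lemma normSq_j_mul_add_one (w : ℂ) :
    normSq (j * w + 1) = normSq w + 2 * (normSq (w - j / 2) - 1 / 4) := by
  obtain ⟨a, b, rfl⟩ : ∃ a b : ℝ, w = a + b * I := ⟨w.re, w.im, (re_add_im w).symm⟩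
  rw [show j * (a + b * I) + 1 =
      ((1 - Real.sqrt 3 * b : ℝ) : ℂ) + ((Real.sqrt 3 * a : ℝ) : ℂ) * I by
      simp only [j]; push_cast; linear_combination (Real.sqrt 3 * b : ℂ) * I_sq,
    show (a + b * I - j / 2 : ℂ) = (a : ℂ) + ((b - Real.sqrt 3 / 2 : ℝ) : ℂ) * I by
      simp only [j]; push_cast; ring,
    normSq_add_mul_I, normSq_add_mul_I, normSq_add_mul_I]
  linear_combination (a ^ 2 + b ^ 2 - 1 / 2) * sqrt_three_sq

lemma one_lt_norm_j_add_inv_of_half_lt {w : ℂ} (hw : 1 / 2 < ‖w - j / 2‖) :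
    1 < ‖j + w⁻¹‖ := by
  rcases eq_or_ne w 0 with rfl | hw0
  · rw [inv_zero, add_zero, j, norm_mul, Complex.norm_I, mul_one, Complex.norm_real,
      Real.norm_of_nonneg (Real.sqrt_nonneg _)]
    nlinarith [sqrt_three_sq, Real.sqrt_nonneg 3]
  have hlt : normSq w < normSq (j * w + 1) := by
    have : 1 / 4 < normSq (w - j / 2) := by rw [← Complex.sq_norm]; nlinarith
    rw [normSq_j_mul_add_one]
    linarith
  rw [show j + w⁻¹ = (j * w + 1) / w by field_simp, norm_div, one_lt_div (norm_pos_iff.2 hw0),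
    ← sq_lt_sq₀ (norm_nonneg _) (norm_nonneg _), Complex.sq_norm, Complex.sq_norm]
  exact hlt

lemma one_lt_norm_j_add_inv {b g : ℂ} (hb : b ∈ 𝔈) (h3 : 3 ≤ normSq b) (hbt : b ∉ exceptional)
    (hg : ‖g‖ < 1) : 1 < ‖j + (b + g)⁻¹‖ := by
  refine one_lt_norm_j_add_inv_of_half_lt ?_
  have := norm_sub_norm_le (b - j / 2) (-g)
  rw [sub_neg_eq_add, norm_neg, sub_add_eq_add_sub] at this
  linarith [three_halves_le_norm_sub_half_j hb h3 hbt]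

lemma one_lt_norm_ρ_pow_mul_j_add_inv (k : ℕ) {c g : ℂ} (hc : c ∈ 𝔈) (h3 : 3 ≤ normSq c)
    (hct : ∀ t ∈ exceptional, c ≠ ρ ^ (-(k : ℤ)) * t) (hg : ‖g‖ < 1) :
    1 < ‖ρ ^ k * j + (c + g)⁻¹‖ := by
  have hu : ‖ρ ^ k‖ = 1 := by rw [norm_pow, norm_ρ, one_pow]
  have hu0 : ρ ^ k ≠ 0 := norm_ne_zero_iff.1 (by rw [hu]; exact one_ne_zero)
  have key := one_lt_norm_j_add_inv (b := ρ ^ k * c) (g := ρ ^ k * g)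
    (mul_mem (pow_mem ρ_mem k) hc)
    (by rwa [normSq_mul, ← Complex.sq_norm (ρ ^ k), hu, one_pow, one_mul])
    (fun ht => hct _ ht (by rw [zpow_neg, zpow_natCast]; field_simp))
    (by rwa [norm_mul, hu, one_mul])
  rwa [← mul_add, show j + (ρ ^ k * (c + g))⁻¹ = (ρ ^ k)⁻¹ * (ρ ^ k * j + (c + g)⁻¹) by
    field_simp, norm_mul, norm_inv, hu, inv_one, one_mul] at key

lemma norm_lt_norm_mul_add {b c q₀ q₁ : ℂ} (hb : b ∈ 𝔈) (hc : c ∈ 𝔈) (hb1 : 1 < ‖b‖)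
    (hc1 : 1 < ‖c‖)
    (hbc : ∀ k : ℕ, k ≤ 5 → b = ρ ^ k * j → ∀ t ∈ exceptional, c ≠ ρ ^ (-(k : ℤ)) * t)
    (h₀₁ : ‖q₀‖ < ‖q₁‖) (h₁₂ : ‖q₁‖ < ‖c * q₁ + q₀‖) :
    ‖c * q₁ + q₀‖ < ‖b * (c * q₁ + q₀) + q₁‖ := by
  generalize hq₂ : c * q₁ + q₀ = q₂ at *
  rcases normSq_eq_three_or_four_le hb hb1 with hb3 | hb4
  · obtain ⟨k, hk, rfl⟩ := exists_eq_ρ_pow_mul_j hb hb3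
    have hq₁ : q₁ ≠ 0 := norm_pos_iff.1 ((norm_nonneg _).trans_lt h₀₁)
    have hq₂0 : q₂ ≠ 0 := norm_pos_iff.1 ((norm_nonneg _).trans_lt h₁₂)
    have hc3 : 3 ≤ normSq c := by
      rcases normSq_eq_three_or_four_le hc hc1 with h | h <;> linarith
    have key := one_lt_norm_ρ_pow_mul_j_add_inv k hc hc3 (hbc k hk rfl)
      (g := q₀ / q₁) (by rwa [norm_div, div_lt_one ((norm_nonneg _).trans_lt h₀₁)])
    rw [show (c + q₀ / q₁)⁻¹ = q₁ / q₂ by rw [← hq₂]; field_simp] at key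
    rw [show ρ ^ k * j * q₂ + q₁ = (ρ ^ k * j + q₁ / q₂) * q₂ by field_simp, norm_mul]
    nlinarith [norm_pos_iff.2 hq₂0]
  · have hb2 : 2 ≤ ‖b‖ := by
      rw [← Complex.sq_norm] at hb4; nlinarith [norm_nonneg b]
    have := norm_sub_norm_le (b * q₂) (-q₁)
    rw [sub_neg_eq_add, norm_neg, norm_mul] at this
    nlinarith [norm_nonneg q₂]

theorem norm_qPair_lt {a : ℕ → ℂ} (ha : ∀ n, a n ∈ 𝔈) (ha1 : ∀ n, 1 < ‖a (n + 1)‖)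
    (hac : ∀ n, ∀ k : ℕ, k ≤ 5 → a (n + 2) = ρ ^ k * j →
      ∀ t ∈ exceptional, a (n + 1) ≠ ρ ^ (-(k : ℤ)) * t) (n : ℕ) :
    ‖qPair a 0 1 n‖ < ‖qPair a 0 1 (n + 1)‖ := by
  suffices ∀ n, ‖qPair a 0 1 n‖ < ‖qPair a 0 1 (n + 1)‖ ∧
      ‖qPair a 0 1 (n + 1)‖ < ‖qPair a 0 1 (n + 2)‖ from (this n).1
  intro n
  induction n with
  | zero => simpa [qPair_add_two] using ha1 0
  | succ n ih =>
    obtain ⟨h₀₁, h₁₂⟩ := ih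
    refine ⟨h₁₂, ?_⟩
    show _ < ‖a (n + 2) * qPair a 0 1 (n + 2) + qPair a 0 1 (n + 1)‖
    rw [qPair_add_two] at h₁₂ ⊢
    exact norm_lt_norm_mul_add (ha _) (ha _) (ha1 _) (ha1 _) (hac n) h₀₁ h₁₂

theorem isConvergent {f : ℂ → ℂ} {K : Subfield ℂ} {r : ℝ} (hf : ∀ w, f w ∈ 𝔈)
    (hK : (𝔈 : Set ℂ) ⊆ K) (hr : r < 1)
    (ha : fundamentalSet f K ⊆ Metric.ball 0 r)
    (hb : ∀ ζ ∈ Inv.inv '' fundamentalSet f K, 1 < ‖f ζ‖)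
    (hc : ∀ k : ℕ, k ≤ 5 → ∀ t ∈ ({-1 + j, j, 1 + j} : Set ℂ),
      Disjoint ((fun w => ρ ^ (-(k : ℤ)) * t + w⁻¹) '' {w : ℂ | f w = ρ ^ k * j})
        ({w : ℂ | f w = ρ ^ (-(k : ℤ)) * t} ∩ Inv.inv '' fundamentalSet f K)) :
    IsConvergent f K r where
  mem w := hK (hf w)
  fundamentalSet_subset := ha
  lt_one := hr
  norm_den_lt w hw := by
    have hΦ := step_iterate_succ_mem_inv_fundamentalSet (fun w => hK (hf w)) hw
    refine norm_qPair_lt (fun n => hf _) (fun n => hb _ (hΦ n)) ?_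
    intro n k hk hak t ht hat
    refine Set.disjoint_left.1 (hc k hk t ht) ⟨(step f)^[n + 2] w, hak, ?_⟩ ⟨hat, hΦ n⟩
    simp only [← hat, partialQuot, Function.iterate_succ_apply' _ (n + 1), step, inv_inv]
    ring

end Eisenstein

theorem eisenstein_algorithm_theorem_general
    (ω ρ jj : ℂ)
    (hω : ω = -(1 / 2) + (Real.sqrt 3 / 2) * Complex.I)
    (hρ : ρ = 1 / 2 + (Real.sqrt 3 / 2) * Complex.I)
    (hjj : jj = Real.sqrt 3 * Complex.I)
    (E : Set ℂ) (hE : E = {w : ℂ | ∃ x y : ℤ, w = (x : ℂ) + (y : ℂ) * ω})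
    (f : ℂ → ℂ) (hfE : ∀ w, f w ∈ E)
    (K : Subfield ℂ) (hK : K = Subfield.closure E)
    (Φ : Set ℂ) (hΦ : Φ = (fun w => w - f w) '' {w : ℂ | w ∉ K})
    (r : ℝ) (hr1 : r < 1)
    (hcond_a : Φ ⊆ Metric.ball (0 : ℂ) r)
    (hcond_b : ∀ ζ ∈ Inv.inv '' Φ, 1 < ‖f ζ‖)
    (hcond_c : ∀ k : ℕ, k ≤ 5 → ∀ t ∈ ({-1 + jj, jj, 1 + jj} : Set ℂ),
      Disjoint ((fun w => ρ ^ (-(k : ℤ)) * t + w⁻¹) '' {w : ℂ | f w = ρ ^ k * jj})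
        ({w : ℂ | f w = ρ ^ (-(k : ℤ)) * t} ∩ Inv.inv '' Φ))
    (z : ℂ) (hzK : z ∉ K)
    (zs : ℕ → ℂ) (hzs0 : zs 0 = z)
    (hzsrec : ∀ n, zs (n + 1) = (zs n - f (zs n))⁻¹)
    (a : ℕ → ℂ) (ha : ∀ n, a n = f (zs n))
    (p q : ℕ → ℂ)
    (hp0 : p 0 = 1) (hp1 : p 1 = a 0)
    (hp : ∀ n, p (n + 2) = a (n + 1) * p (n + 1) + p n)
    (hq0 : q 0 = 0) (hq1 : q 1 = 1)
    (hq : ∀ n, q (n + 2) = a (n + 1) * q (n + 1) + q n) :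
    (∀ n : ℕ, 1 ≤ n → ‖q n‖ < ‖q (n + 1)‖) ∧
    (∀ n : ℕ, q (n + 1) ≠ 0) ∧
    Filter.Tendsto (fun n => p (n + 1) / q (n + 1)) Filter.atTop (nhds z) ∧
    (∀ n : ℕ, ‖z - p (n + 1) / q (n + 1)‖ ≤
      r / (1 - r) * (‖q (n + 1)‖ ^ 2)⁻¹) ∧
    ((z ∉ K ∧ ∃ A B C : ℂ, A ∈ K ∧ B ∈ K ∧ C ∈ K ∧ A ≠ 0 ∧
        A * z ^ 2 + B * z + C = 0) ↔
      ∃ m k : ℕ, 1 ≤ k ∧ ∀ n, m ≤ n → a (n + k) = a n) := by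
  obtain rfl : ω = Eisenstein.ω := hω
  obtain rfl : ρ = Eisenstein.ρ := hρ
  obtain rfl : jj = Eisenstein.j := hjj
  obtain rfl : E = (𝔈 : Set ℂ) := hE
  subst hK hΦ
  have h := Eisenstein.isConvergent hfE Subfield.subset_closure hr1 hcond_a hcond_b hcond_c
  obtain rfl : zs = fun n => (CFAlgorithm.step f)^[n] z := by
    funext n
    induction n with
    | zero => exact hzs0
    | succ n ih => rw [hzsrec, ih, Function.iterate_succ_apply']; rfl
  obtain rfl : a = CFAlgorithm.partialQuot f z := funext ha
  obtain rfl : q = CFAlgorithm.den f z := eq_qPair hq0 hq1 hq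
  obtain rfl : p = CFAlgorithm.num f z := eq_qPair hp0 hp1 hp
  exact ⟨fun n _ => h.norm_den_lt z hzK n, h.den_ne_zero hzK, h.tendsto_convergent hzK,
    h.norm_sub_convergent_le hzK,
    h.isQuadSurd_iff_eventuallyPeriodic hfE Eisenstein.finite_setOf_norm_le hzK⟩

/-- Theorem on continued fractions with Eisenstein-integer partial quotients:
for an `𝔈`-valued algorithm `f` satisfying conditions (a), (b), (c), and
`z ∉ K` (`K` the subfield generated by `𝔈`), the denominators of the
convergents strictly increase in absolute value (in particular they are
nonzero), the convergents tend to `z` with `|z − pₙ/qₙ| ≤ (r/(1−r))|qₙ|⁻²`,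
and `z` is a quadratic surd over `K` iff the sequence of partial quotients is
eventually periodic.  (Q-pairs are indexed with offset one, `q (n+1) = qₙ`.) -/
theorem eisenstein_algorithm_theorem
    (ω ρ jj : ℂ)
    (hω : ω = -(1 / 2) + (Real.sqrt 3 / 2) * Complex.I)
    (hρ : ρ = 1 / 2 + (Real.sqrt 3 / 2) * Complex.I)
    (hjj : jj = Real.sqrt 3 * Complex.I)
    (E : Set ℂ) (hE : E = {w : ℂ | ∃ x y : ℤ, w = (x : ℂ) + (y : ℂ) * ω})
    (f : ℂ → ℂ) (hfE : ∀ w, f w ∈ E) (hfalg : ∀ w, ‖w - f w‖ ≤ 1)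
    (K : Subfield ℂ) (hK : K = Subfield.closure E)
    (Φ : Set ℂ) (hΦ : Φ = (fun w => w - f w) '' {w : ℂ | w ∉ K})
    (r : ℝ) (hr0 : 0 < r) (hr1 : r < 1)
    (hcond_a : Φ ⊆ Metric.ball (0 : ℂ) r)
    (hcond_b : ∀ ζ ∈ Inv.inv '' Φ, 1 < ‖f ζ‖)
    (hcond_c : ∀ k : ℕ, k ≤ 5 → ∀ t ∈ ({-1 + jj, jj, 1 + jj} : Set ℂ),
      Disjoint ((fun w => ρ ^ (-(k : ℤ)) * t + w⁻¹) '' {w : ℂ | f w = ρ ^ k * jj})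
        ({w : ℂ | f w = ρ ^ (-(k : ℤ)) * t} ∩ Inv.inv '' Φ))
    (z : ℂ) (hzK : z ∉ K)
    (zs : ℕ → ℂ) (hzs0 : zs 0 = z)
    (hzsrec : ∀ n, zs (n + 1) = (zs n - f (zs n))⁻¹)
    (a : ℕ → ℂ) (ha : ∀ n, a n = f (zs n))
    (p q : ℕ → ℂ)
    (hp0 : p 0 = 1) (hp1 : p 1 = a 0)
    (hp : ∀ n, p (n + 2) = a (n + 1) * p (n + 1) + p n)
    (hq0 : q 0 = 0) (hq1 : q 1 = 1)
    (hq : ∀ n, q (n + 2) = a (n + 1) * q (n + 1) + q n) :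
    (∀ n : ℕ, 1 ≤ n → ‖q n‖ < ‖q (n + 1)‖) ∧
    (∀ n : ℕ, q (n + 1) ≠ 0) ∧
    Filter.Tendsto (fun n => p (n + 1) / q (n + 1)) Filter.atTop (nhds z) ∧
    (∀ n : ℕ, ‖z - p (n + 1) / q (n + 1)‖ ≤
      r / (1 - r) * (‖q (n + 1)‖ ^ 2)⁻¹) ∧
    ((z ∉ K ∧ ∃ A B C : ℂ, A ∈ K ∧ B ∈ K ∧ C ∈ K ∧ A ≠ 0 ∧
        A * z ^ 2 + B * z + C = 0) ↔
      ∃ m k : ℕ, 1 ≤ k ∧ ∀ n, m ≤ n → a (n + k) = a n) :=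
  eisenstein_algorithm_theorem_general ω ρ jj hω hρ hjj E hE f hfE K hK Φ hΦ r hr1 hcond_a hcond_b
    hcond_c z hzK zs hzs0 hzsrec a ha p q hp0 hp1 hp hq0 hq1 hq
end
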